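/- arXiv:1511.07683 — 8 statements merged into one kernel-verified Lean document; each statement's English description precedes it below -/
import Mathlib

section
/- A bilinear map θ : NF_n × NF_n → V is a central 2-cocycle if and only if θ(e_i, e_j) = 0 for all j ≥ 2, i.e., the space ZL^2(NF_n, V) has basis the maps θ_{i,j} defined by θ_{i,j}(e_i, e_1) = x_j (1 ≤ i ≤ n, 1 ≤ j ≤ k), all other products of basis elements mapping to 0, where x_1,...,x_k is a basis of V. -/
/-- Multiplication of the null-filiform Leibniz algebra `NF_n`:
`[e_i, e_1] = e_{i+1}` for `1 ≤ i ≤ n-1`, other products zero. -/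
def NFmul (n : ℕ) (x y : Fin n → ℂ) : Fin n → ℂ :=
  fun k =>
    if 1 ≤ (k : ℕ) then
      x ⟨(k : ℕ) - 1, Nat.lt_of_le_of_lt (Nat.sub_le _ _) k.isLt⟩ *
        y ⟨0, Nat.lt_of_le_of_lt (Nat.zero_le _) k.isLt⟩
    else 0

lemma NFmul_zero_right {n : ℕ} (hn : 0 < n) (x z : Fin n → ℂ)
    (hz : z ⟨0, hn⟩ = 0) : NFmul n x z = 0 := by
  funext m
  simp only [NFmul, Pi.zero_apply]
  split
  · rw [show (⟨0, Nat.lt_of_le_of_lt (Nat.zero_le _) m.isLt⟩ : Fin n) = ⟨0, hn⟩ from rfl, hz,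
      mul_zero]
  · rfl

lemma NFmul_eq_smul {n : ℕ} (hn : 0 < n) (x y : Fin n → ℂ) :
    NFmul n x y = y ⟨0, hn⟩ • NFmul n x (Pi.single ⟨0, hn⟩ 1) := by
  funext m
  simp only [NFmul, Pi.smul_apply, smul_eq_mul]
  split
  · rw [show (⟨0, Nat.lt_of_le_of_lt (Nat.zero_le _) m.isLt⟩ : Fin n) = ⟨0, hn⟩ from rfl]
    rw [Pi.single_eq_same]
    ring
  · simp

lemma NFmul_single_shift {n : ℕ} (hn : 0 < n) (i : Fin n) (hi : (i : ℕ) + 1 < n) :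
    NFmul n (Pi.single i 1) (Pi.single ⟨0, hn⟩ 1) =
      Pi.single (⟨(i : ℕ) + 1, hi⟩ : Fin n) 1 := by
  funext m
  simp only [NFmul]
  split
  · rename_i h
    rw [show (⟨0, Nat.lt_of_le_of_lt (Nat.zero_le _) m.isLt⟩ : Fin n) = ⟨0, hn⟩ from rfl,
      Pi.single_eq_same, mul_one]
    simp only [Pi.single_apply, Fin.ext_iff]
    congr 1
    simp only [eq_iff_iff]
    omega
  · rename_i h
    rw [Pi.single_apply, if_neg]
    simp only [Fin.ext_iff]
    omega

lemma NFmul_apply_zero {n : ℕ} (hn : 0 < n) (y z : Fin n → ℂ) :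
    NFmul n y z ⟨0, hn⟩ = 0 := by
  simp [NFmul]

lemma theta_vanish {n k : ℕ} (hn : 0 < n)
    (θ : (Fin n → ℂ) →ₗ[ℂ] (Fin n → ℂ) →ₗ[ℂ] (Fin k → ℂ))
    (hθ : ∀ i j : Fin n, j ≠ ⟨0, hn⟩ →
      θ (Pi.single i (1 : ℂ)) (Pi.single j (1 : ℂ)) = 0)
    (x w : Fin n → ℂ) (hw : w ⟨0, hn⟩ = 0) : θ x w = 0 := by
  have h1 : ∀ j : Fin n, j ≠ ⟨0, hn⟩ → ∀ x, θ x (Pi.single j 1) = 0 := by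
    intro j hj x
    have h0 : θ.flip (Pi.single j 1) = 0 := by
      apply Module.Basis.ext (Pi.basisFun ℂ (Fin n))
      intro i
      simpa using hθ i j hj
    have := congrArg (fun f => f x) h0
    simpa [LinearMap.flip_apply] using this
  have hw' : w = ∑ j : Fin n, Pi.single j (w j) := (Finset.univ_sum_single w).symm
  rw [hw', map_sum]
  apply Finset.sum_eq_zero
  intro j _
  by_cases hj : j = ⟨0, hn⟩
  · subst hj; rw [hw]; simp
  · have h2 : Pi.single j (w j) = w j • (Pi.single j (1 : ℂ) : Fin n → ℂ) := by
      rw [← Pi.single_smul, smul_eq_mul, mul_one]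
    rw [h2, map_smul, h1 j hj, smul_zero]

/-- A bilinear map `θ : NF_n × NF_n → V` (with `V = ℂ^k`) is a central
2-cocycle, i.e. `θ(x,[y,z]) = θ([x,y],z) - θ([x,z],y)`, if and only if
`θ(e_i, e_j) = 0` for all `j ≥ 2` (0-indexed: `j ≠ 0`).  Equivalently,
`ZL^2(NF_n, V)` has basis the maps `θ_{i,j}` with `θ_{i,j}(e_i, e_1) = x_j`. -/
theorem NF_cocycle_iff (n k : ℕ) (hn : 0 < n)
    (θ : (Fin n → ℂ) →ₗ[ℂ] (Fin n → ℂ) →ₗ[ℂ] (Fin k → ℂ)) :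
    (∀ x y z : Fin n → ℂ,
        θ x (NFmul n y z) = θ (NFmul n x y) z - θ (NFmul n x z) y) ↔
      (∀ i j : Fin n, j ≠ ⟨0, hn⟩ →
        θ (Pi.single i (1 : ℂ)) (Pi.single j (1 : ℂ)) = 0) := by
  set e0 : Fin n → ℂ := Pi.single ⟨0, hn⟩ 1 with he0
  constructor
  · intro H i j hj
    have hj1 : 1 ≤ (j : ℕ) := by
      rcases Nat.eq_zero_or_pos (j : ℕ) with h | h
      · exact absurd (Fin.ext h) hj
      · exact h
    have hsingle0 : ∀ m : Fin n, m ≠ ⟨0, hn⟩ →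
        (Pi.single m (1 : ℂ) : Fin n → ℂ) ⟨0, hn⟩ = 0 := by
      intro m hm
      rw [Pi.single_apply, if_neg (fun h => hm h.symm)]
    -- Step A : θ (NFmul x e0) z = 0 whenever z₀ = 0
    have A : ∀ x z : Fin n → ℂ, z ⟨0, hn⟩ = 0 → θ (NFmul n x e0) z = 0 := by
      intro x z hz
      have := H x e0 z
      rw [NFmul_zero_right hn e0 z hz, NFmul_zero_right hn x z hz] at this
      simp only [map_zero, LinearMap.zero_apply, sub_zero] at this
      exact this.symm
    have hjn : (j : ℕ) < n := j.isLt
    by_cases hi : i = ⟨0, hn⟩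
    · -- first argument is e₀
      subst hi
      have hn2 : (0 : ℕ) + 1 < n := by omega
      set j' : Fin n := ⟨(j : ℕ) - 1, by omega⟩ with hj'
      have hj'1 : (j' : ℕ) + 1 < n := by simp [hj']; omega
      have hshift : NFmul n (Pi.single j' 1) e0 = Pi.single j 1 := by
        rw [he0, NFmul_single_shift hn j' hj'1,
          show (⟨(j' : ℕ) + 1, hj'1⟩ : Fin n) = j from Fin.ext (by simp only [hj', Fin.val_mk]; omega)]
      have hE1 : NFmul n e0 e0 = Pi.single (⟨0 + 1, hn2⟩ : Fin n) 1 :=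
        NFmul_single_shift hn ⟨0, hn⟩ hn2
      have key := H e0 (Pi.single j' 1) e0
      rw [hshift, NFmul_eq_smul hn e0 (Pi.single j' 1), ← he0, hE1, map_smul,
        LinearMap.smul_apply] at key
      by_cases h1 : (j : ℕ) = 1
      · have hj'0 : j' = ⟨0, hn⟩ := Fin.ext (by simp [hj']; omega)
        rw [hj'0, ← he0] at key
        rw [he0, Pi.single_eq_same, one_smul, sub_self] at key
        exact key
      · have hj'ne : j' ≠ ⟨0, hn⟩ := by
          intro h
          have := congrArg Fin.val h
          simp [hj'] at this
          omega
        rw [hsingle0 j' hj'ne, zero_smul, zero_sub, ← hE1,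
          A e0 (Pi.single j' 1) (hsingle0 j' hj'ne), neg_zero] at key
        exact key
    · -- first argument is eᵢ with i ≥ 1
      have hi1 : 1 ≤ (i : ℕ) := by
        rcases Nat.eq_zero_or_pos (i : ℕ) with h | h
        · exact absurd (Fin.ext h) hi
        · exact h
      set i' : Fin n := ⟨(i : ℕ) - 1, by omega⟩ with hi'
      have hi'1 : (i' : ℕ) + 1 < n := by simp [hi']; omega
      have hshift : NFmul n (Pi.single i' 1) e0 = Pi.single i 1 := by
        rw [he0, NFmul_single_shift hn i' hi'1,
          show (⟨(i' : ℕ) + 1, hi'1⟩ : Fin n) = i from Fin.ext (by simp only [hi', Fin.val_mk]; omega)]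
      rw [← hshift]
      exact A (Pi.single i' 1) (Pi.single j 1) (hsingle0 j hj)
  · intro hθ x y z
    have hL : θ x (NFmul n y z) = 0 :=
      theta_vanish hn θ hθ x _ (NFmul_apply_zero hn y z)
    have key : ∀ u v : Fin n → ℂ,
        θ (NFmul n x u) v = u ⟨0, hn⟩ • v ⟨0, hn⟩ • θ (NFmul n x e0) e0 := by
      intro u v
      rw [NFmul_eq_smul hn x u, map_smul, LinearMap.smul_apply]
      congr 1
      have hsub : θ (NFmul n x e0) v - v ⟨0, hn⟩ • θ (NFmul n x e0) e0 = 0 := by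
        rw [← map_smul, ← map_sub]
        apply theta_vanish hn θ hθ
        simp [he0, Pi.single_eq_same]
      exact sub_eq_zero.mp hsub
    rw [hL, key y z, key z y, smul_comm (y ⟨0, hn⟩) (z ⟨0, hn⟩), sub_self]
end

section
/- The 2-coboundaries of NF_n with values in V are exactly the bilinear maps spanned by θ_{i,j}(e_i, e_1) = x_j for 1 ≤ i ≤ n-1, 1 ≤ j ≤ k; consequently dim HL^2(NF_n, V) = k, with a basis of cohomology classes represented by the cocycles θ_j(e_n, e_1) = x_j, 1 ≤ j ≤ k. -/
namespace NFaux

variable {n k : ℕ}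

lemma fin_last_val (hn : 0 < n) (i : Fin n) (h : ¬ (i : ℕ) + 1 < n) :
    i = ⟨n - 1, Nat.sub_lt hn Nat.one_pos⟩ := by
  have := i.isLt
  apply Fin.ext
  simp only
  omega

lemma single_apply_ne (j m : Fin n) (h : j ≠ m) :
    (Pi.single j (1 : ℂ) : Fin n → ℂ) m = 0 := by
  rw [Pi.single_apply, if_neg]
  intro e; exact h e.symm

lemma nf_zero (hn : 0 < n) (i j : Fin n)
    (hij : j ≠ (⟨0, hn⟩ : Fin n) ∨ i = ⟨n - 1, Nat.sub_lt hn Nat.one_pos⟩) :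
    NFmul n (Pi.single i (1 : ℂ)) (Pi.single j (1 : ℂ)) = 0 := by
  funext m
  have hm := m.isLt
  have hi := i.isLt
  unfold NFmul
  rw [Pi.single_apply, Pi.single_apply]
  simp only [ne_eq, Fin.ext_iff, Fin.val_mk] at hij ⊢
  simp only [Pi.zero_apply]
  split_ifs <;> (try simp) <;>
    (try omega) <;>
    (rcases hij with hj | hi2
     · exact absurd (by omega) hj
     · omega)

lemma nf_succ (hn : 0 < n) (i : Fin n) (h2 : (i : ℕ) + 1 < n) :
    NFmul n (Pi.single i (1 : ℂ)) (Pi.single (⟨0, hn⟩ : Fin n) (1 : ℂ)) =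
      Pi.single (⟨(i : ℕ) + 1, h2⟩ : Fin n) (1 : ℂ) := by
  funext m
  have hm := m.isLt
  unfold NFmul
  rw [Pi.single_apply, Pi.single_apply, Pi.single_apply]
  simp only [Fin.ext_iff]
  split_ifs <;> (try simp) <;> omega

/-- The "shift down and truncate" linear map. -/
def S (n : ℕ) : (Fin n → ℂ) →ₗ[ℂ] (Fin n → ℂ) where
  toFun v := fun i => if h : (i : ℕ) + 1 < n then v ⟨(i : ℕ) + 1, h⟩ else 0
  map_add' v w := by
    funext i
    by_cases h : (i : ℕ) + 1 < n <;> simp [h]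
  map_smul' c v := by
    funext i
    by_cases h : (i : ℕ) + 1 < n <;> simp [h]

lemma S_nfmul (hn : 0 < n) (x y : Fin n → ℂ) :
    S n (NFmul n x y) =
      y ⟨0, hn⟩ •
        (x - x ⟨n - 1, Nat.sub_lt hn Nat.one_pos⟩ •
          (Pi.single (⟨n - 1, Nat.sub_lt hn Nat.one_pos⟩ : Fin n) (1 : ℂ) : Fin n → ℂ)) := by
  funext i
  have hi := i.isLt
  simp only [S, LinearMap.coe_mk, AddHom.coe_mk, Pi.smul_apply, Pi.sub_apply,
    Pi.single_apply, smul_eq_mul]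
  by_cases h : (i : ℕ) + 1 < n
  · rw [dif_pos h]
    unfold NFmul
    rw [if_pos (by simp)]
    have hne : ¬ (i = (⟨n - 1, Nat.sub_lt hn Nat.one_pos⟩ : Fin n)) := by
      simp only [Fin.ext_iff]; omega
    rw [if_neg hne]
    simp only [Nat.add_sub_cancel, mul_zero, sub_zero]
    ring_nf
  · rw [dif_neg h]
    have he : i = (⟨n - 1, Nat.sub_lt hn Nat.one_pos⟩ : Fin n) := fin_last_val hn i h
    rw [if_pos he, he]
    ring

/-- If `θ` kills all basis pairs `(e_i, e_j)` with `j ≠ 0`, then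
`θ x y = y 0 • θ x e₀`. -/
lemma theta_eq (hn : 0 < n)
    (θ : (Fin n → ℂ) →ₗ[ℂ] (Fin n → ℂ) →ₗ[ℂ] (Fin k → ℂ))
    (h0 : ∀ i j : Fin n, j ≠ (⟨0, hn⟩ : Fin n) →
      θ (Pi.single i (1 : ℂ)) (Pi.single j (1 : ℂ)) = 0)
    (x y : Fin n → ℂ) :
    θ x y = y ⟨0, hn⟩ • θ x (Pi.single (⟨0, hn⟩ : Fin n) (1 : ℂ)) := by
  have hflip : ∀ j : Fin n, j ≠ (⟨0, hn⟩ : Fin n) →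
      θ.flip ((Pi.single j (1 : ℂ) : Fin n → ℂ)) = 0 := by
    intro j hj
    apply Module.Basis.ext (Pi.basisFun ℂ (Fin n))
    intro i
    simp only [Pi.basisFun_apply, LinearMap.flip_apply, LinearMap.zero_apply]
    exact h0 i j hj
  have hx : θ x = (LinearMap.proj (⟨0, hn⟩ : Fin n)).smulRight
      (θ x (Pi.single (⟨0, hn⟩ : Fin n) (1 : ℂ))) := by
    apply Module.Basis.ext (Pi.basisFun ℂ (Fin n))
    intro j
    simp only [Pi.basisFun_apply, LinearMap.smulRight_apply, LinearMap.proj_apply]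
    by_cases hj : j = (⟨0, hn⟩ : Fin n)
    · subst hj
      simp
    · have h1 : θ x ((Pi.single j (1 : ℂ) : Fin n → ℂ)) = 0 := by
        calc θ x ((Pi.single j (1 : ℂ) : Fin n → ℂ))
            = θ.flip ((Pi.single j (1 : ℂ) : Fin n → ℂ)) x := rfl
          _ = 0 := by rw [hflip j hj]; rfl
      rw [h1, single_apply_ne j _ hj, zero_smul]
  conv_lhs => rw [hx]
  rfl

/-- Backward direction of the coboundary characterization. -/
lemma coboundary_of_vanish (hn : 0 < n)
    (θ : (Fin n → ℂ) →ₗ[ℂ] (Fin n → ℂ) →ₗ[ℂ] (Fin k → ℂ))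
    (h : ∀ i j : Fin n, (j ≠ (⟨0, hn⟩ : Fin n) ∨ i = ⟨n - 1, Nat.sub_lt hn Nat.one_pos⟩) →
      θ (Pi.single i (1 : ℂ)) (Pi.single j (1 : ℂ)) = 0) :
    ∃ φ : (Fin n → ℂ) →ₗ[ℂ] (Fin k → ℂ), ∀ x y, θ x y = φ (NFmul n x y) := by
  refine ⟨(θ.flip ((Pi.single (⟨0, hn⟩ : Fin n) (1 : ℂ) : Fin n → ℂ))).comp (S n), ?_⟩
  intro x y
  have key := theta_eq hn θ (fun i j hj => h i j (Or.inl hj)) x y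
  simp only [LinearMap.comp_apply, LinearMap.flip_apply]
  rw [S_nfmul hn, map_smul, map_sub, map_smul]
  have hlast : θ (Pi.single (⟨n - 1, Nat.sub_lt hn Nat.one_pos⟩ : Fin n) (1 : ℂ))
      (Pi.single (⟨0, hn⟩ : Fin n) (1 : ℂ)) = 0 := h _ _ (Or.inr rfl)
  simp only [LinearMap.sub_apply, LinearMap.smul_apply, hlast, smul_zero, sub_zero]
  exact key

/-- Cocycle identity kills all basis pairs `(e_i, e_j)` with `(j : ℕ) ≥ 1`. -/
lemma cocycle_vanish (hn : 0 < n)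
    (θ : (Fin n → ℂ) →ₗ[ℂ] (Fin n → ℂ) →ₗ[ℂ] (Fin k → ℂ))
    (hc : ∀ x y z : Fin n → ℂ,
      θ x (NFmul n y z) = θ (NFmul n x y) z - θ (NFmul n x z) y) :
    ∀ m : ℕ, 1 ≤ m → ∀ (hmn : m < n) (i : Fin n),
      θ (Pi.single i (1 : ℂ)) (Pi.single (⟨m, hmn⟩ : Fin n) (1 : ℂ)) = 0 := by
  intro m
  induction m with
  | zero => omega
  | succ p ih =>
    intro _ hmn i
    have h := hc (Pi.single i (1 : ℂ)) (Pi.single (⟨p, by omega⟩ : Fin n) (1 : ℂ))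
      (Pi.single (⟨0, hn⟩ : Fin n) (1 : ℂ))
    rw [nf_succ hn (⟨p, by omega⟩ : Fin n) (show p + 1 < n from hmn)] at h
    by_cases hp : p = 0
    · subst hp
      exact h.trans (sub_self _)
    · have hne : (⟨p, by omega⟩ : Fin n) ≠ (⟨0, hn⟩ : Fin n) := by
        simp only [ne_eq, Fin.ext_iff]; omega
      rw [nf_zero hn i _ (Or.inl hne), map_zero, LinearMap.zero_apply, zero_sub] at h
      by_cases hi : (i : ℕ) + 1 < n
      · rw [nf_succ hn i hi] at h
        exact h.trans (neg_eq_zero.mpr (ih (by omega) (by omega)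
          (⟨(i : ℕ) + 1, hi⟩ : Fin n)))
      · rw [nf_zero hn i _ (Or.inr (fin_last_val hn i hi)), map_zero,
          LinearMap.zero_apply] at h
        exact h.trans neg_zero

end NFaux

/-- The 2-coboundaries of `NF_n` with values in `V = ℂ^k` are exactly the
bilinear maps supported on the pairs `(e_i, e_1)`, `1 ≤ i ≤ n-1` (with
arbitrary values there), i.e. spanned by the `θ_{i,j}(e_i,e_1) = x_j`;
consequently `dim HL^2(NF_n,V) = k`: every central 2-cocycle is congruent
modulo coboundaries to a unique combination `Σ_j c_j θ_j` of the cocycles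
`θ_j(e_n, e_1) = x_j`. -/
theorem NF_coboundaries_and_HL2 (n k : ℕ) (hn : 0 < n) :
    (∀ θ : (Fin n → ℂ) →ₗ[ℂ] (Fin n → ℂ) →ₗ[ℂ] (Fin k → ℂ),
      (∃ φ : (Fin n → ℂ) →ₗ[ℂ] (Fin k → ℂ), ∀ x y, θ x y = φ (NFmul n x y)) ↔
        (∀ i j : Fin n, (j ≠ ⟨0, hn⟩ ∨ i = ⟨n - 1, Nat.sub_lt hn Nat.one_pos⟩) →
          θ (Pi.single i (1 : ℂ)) (Pi.single j (1 : ℂ)) = 0)) ∧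
    (∀ θ : (Fin n → ℂ) →ₗ[ℂ] (Fin n → ℂ) →ₗ[ℂ] (Fin k → ℂ),
      (∀ x y z : Fin n → ℂ,
          θ x (NFmul n y z) = θ (NFmul n x y) z - θ (NFmul n x z) y) →
      ∃! c : Fin k → ℂ, ∃ φ : (Fin n → ℂ) →ₗ[ℂ] (Fin k → ℂ),
        ∀ x y : Fin n → ℂ,
          θ x y - (x ⟨n - 1, Nat.sub_lt hn Nat.one_pos⟩ *
              y ⟨0, hn⟩) • c = φ (NFmul n x y)) := by
  have part1 : ∀ θ : (Fin n → ℂ) →ₗ[ℂ] (Fin n → ℂ) →ₗ[ℂ] (Fin k → ℂ),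
      (∃ φ : (Fin n → ℂ) →ₗ[ℂ] (Fin k → ℂ), ∀ x y, θ x y = φ (NFmul n x y)) ↔
        (∀ i j : Fin n, (j ≠ ⟨0, hn⟩ ∨ i = ⟨n - 1, Nat.sub_lt hn Nat.one_pos⟩) →
          θ (Pi.single i (1 : ℂ)) (Pi.single j (1 : ℂ)) = 0) := by
    intro θ
    constructor
    · rintro ⟨φ, hφ⟩ i j hij
      rw [hφ, NFaux.nf_zero hn i j hij, map_zero]
    · exact NFaux.coboundary_of_vanish hn θ
  refine ⟨part1, ?_⟩
  intro θ hc
  set iN : Fin n := ⟨n - 1, Nat.sub_lt hn Nat.one_pos⟩ with hiN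
  set j0 : Fin n := ⟨0, hn⟩ with hj0
  set c : Fin k → ℂ := θ (Pi.single iN (1 : ℂ)) (Pi.single j0 (1 : ℂ)) with hcdef
  -- the modified bilinear map θ - D, where D x y = (x iN * y j0) • c
  set D : (Fin n → ℂ) →ₗ[ℂ] (Fin n → ℂ) →ₗ[ℂ] (Fin k → ℂ) :=
    (LinearMap.proj iN : (Fin n → ℂ) →ₗ[ℂ] ℂ).smulRight
      ((LinearMap.proj j0 : (Fin n → ℂ) →ₗ[ℂ] ℂ).smulRight c) with hD
  have hDapp : ∀ x y : Fin n → ℂ, D x y = (x iN * y j0) • c := by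
    intro x y
    simp [hD, LinearMap.smulRight_apply, LinearMap.proj_apply, smul_smul]
  refine ⟨c, ?_, ?_⟩
  · -- existence
    have hvanish : ∀ i j : Fin n, (j ≠ j0 ∨ i = iN) →
        (θ - D) (Pi.single i (1 : ℂ)) (Pi.single j (1 : ℂ)) = 0 := by
      intro i j hij
      simp only [LinearMap.sub_apply]
      rw [hDapp]
      by_cases hj : j = j0
      · subst hj
        rcases hij with hj' | hi
        · exact absurd rfl hj'
        · subst hi
          have h1 : (Pi.single iN (1 : ℂ) : Fin n → ℂ) iN = 1 := by simp
          have h2 : (Pi.single j0 (1 : ℂ) : Fin n → ℂ) j0 = 1 := by simp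
          rw [h1, h2, one_mul, one_smul, ← hcdef, sub_self]
      · have hj' : (Pi.single j (1 : ℂ) : Fin n → ℂ) j0 = 0 :=
          NFaux.single_apply_ne j j0 hj
        rw [hj', mul_zero, zero_smul, sub_zero]
        have hjv : 1 ≤ (j : ℕ) := by
          by_contra hcon
          exact hj (Fin.ext (by simpa [hj0] using by omega))
        have := NFaux.cocycle_vanish hn θ hc (j : ℕ) hjv j.isLt i
        exact (by exact this : θ (Pi.single i (1 : ℂ)) (Pi.single j (1 : ℂ)) = 0)
    obtain ⟨φ, hφ⟩ := NFaux.coboundary_of_vanish hn (θ - D) hvanish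
    refine ⟨φ, fun x y => ?_⟩
    have := hφ x y
    simp only [LinearMap.sub_apply] at this
    rw [hDapp] at this
    exact this
  · -- uniqueness
    rintro c' ⟨φ', hφ'⟩
    have hNFlast : NFmul n (Pi.single iN (1 : ℂ)) (Pi.single j0 (1 : ℂ)) = 0 :=
      NFaux.nf_zero hn iN j0 (Or.inr rfl)
    have := hφ' (Pi.single iN (1 : ℂ)) (Pi.single j0 (1 : ℂ))
    rw [hNFlast, map_zero] at this
    have h1 : (Pi.single iN (1 : ℂ) : Fin n → ℂ) iN = 1 := by simp
    have h2 : (Pi.single j0 (1 : ℂ) : Fin n → ℂ) j0 = 1 := by simp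
    rw [h1, h2, one_mul, one_smul, sub_eq_zero] at this
    rw [← this, hcdef]
end

section
/- Every central extension of NF_n by a k-dimensional abelian algebra V (with V the center of the extension) is isomorphic as an algebra either to NF_n ⊕ C^k or to NF_{n+1} ⊕ C^{k-1}, and these two algebras are not isomorphic. -/
/-- The central extension `L_θ = NF_n ⊕ V` with bracket
`[x+u, y+v] = [x,y] + θ(x,y)`. -/
def extMul (n k : ℕ) (θ : (Fin n → ℂ) → (Fin n → ℂ) → (Fin k → ℂ))
    (a b : (Fin n → ℂ) × (Fin k → ℂ)) : (Fin n → ℂ) × (Fin k → ℂ) :=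
  (NFmul n a.1 b.1, θ a.1 b.1)

/-- The split algebra `NF_m ⊕ ℂ^j` (zero products with the abelian part). -/
def splitMul (m j : ℕ) (a b : (Fin m → ℂ) × (Fin j → ℂ)) :
    (Fin m → ℂ) × (Fin j → ℂ) :=
  (NFmul m a.1 b.1, 0)

/-!
Indices are 0-based: `e₀ = Pi.single 0 1` is the generator of `NF_n`, `eₗ` its last basis
vector, and right multiplication by `e₀` is the forward shift. The cocycle identity forces
`θ x y = y₀ • θ x e₀`, and after subtracting the coboundary of `G = θ(·, e₀) ∘ backwardShift`
only the term `(x_last * y₀) • θ eₗ e₀` survives. The centre condition makes `v = θ eₗ e₀`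
nonzero (otherwise `eₗ` would be central), and sending `v` to a new last basis vector identifies
`L_θ` with `NF_{n+1} ⊕ ℂ^{k-1}`. The two split algebras are told apart by right nilpotency: in
`NF_n ⊕ ℂ^k` every `n`-fold right product vanishes, while in `NF_{n+1}` the `n`-fold right power
of `e₀` is the last basis vector.
-/

open Function

theorem exists_linearEquiv_apply_eq {K V : Type*} [DivisionRing K] [AddCommGroup V] [Module K V]
    {v w : V} (hv : v ≠ 0) (hw : w ≠ 0) : ∃ g : V ≃ₗ[K] V, g v = w := by
  obtain ⟨g, hg⟩ := Submodule.exists_linearEquiv_restrict_eq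
    ((LinearEquiv.toSpanNonzeroSingleton K V v hv).symm.trans
      (LinearEquiv.toSpanNonzeroSingleton K V w hw))
  refine ⟨g, ?_⟩
  rw [← hg ⟨v, Submodule.mem_span_singleton_self v⟩, LinearEquiv.trans_apply,
    (LinearEquiv.symm_apply_eq _).mpr (LinearEquiv.toSpanNonzeroSingleton_one K V v hv).symm,
    LinearEquiv.toSpanNonzeroSingleton_one]

def Fin.snocLinearEquiv (R M : Type*) [Semiring R] [AddCommMonoid M] [Module R M] (n : ℕ) :
    ((Fin n → M) × M) ≃ₗ[R] (Fin (n + 1) → M) where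
  toFun p := Fin.snoc p.1 p.2
  invFun z := (Fin.init z, z (Fin.last n))
  left_inv p := by simp
  right_inv z := by simp
  map_add' p q := by ext i; refine Fin.lastCases ?_ (fun i => ?_) i <;> simp
  map_smul' c p := by ext i; refine Fin.lastCases ?_ (fun i => ?_) i <;> simp

theorem Fin.snoc_init_zero_add_smul_single_last {R : Type*} [Semiring R] {n : ℕ}
    (x : Fin (n + 1) → R) :
    Fin.snoc (Fin.init x) 0 + x (Fin.last n) • Pi.single (Fin.last n) 1 = x := by
  ext i
  refine Fin.lastCases ?_ (fun i => ?_) i <;> simp [Fin.init, Fin.castSucc_ne_last]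

variable {n : ℕ}

theorem NFmul_succ (x y : Fin (n + 1) → ℂ) :
    NFmul (n + 1) x y = y 0 • Fin.cons 0 (Fin.init x) := by
  ext i
  refine Fin.cases ?_ (fun i => ?_) i
  · simp [NFmul]
  · simp [NFmul, Fin.init, Fin.castSucc, Fin.castAdd, Fin.castLE, mul_comm]

theorem NFmul_single_zero_right (x : Fin (n + 1) → ℂ) :
    NFmul (n + 1) x (Pi.single 0 1) = Fin.cons 0 (Fin.init x) := by
  simp [NFmul_succ]

theorem NFmul_eq_smul_NFmul_single_zero (x y : Fin (n + 1) → ℂ) :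
    NFmul (n + 1) x y = y 0 • NFmul (n + 1) x (Pi.single 0 1) := by
  rw [NFmul_succ, NFmul_single_zero_right]

theorem NFmul_single_last_left (y : Fin (n + 1) → ℂ) :
    NFmul (n + 1) (Pi.single (Fin.last n) 1) y = 0 := by
  ext i
  refine Fin.cases ?_ (fun i => ?_) i <;> simp [NFmul_succ, Fin.init, Fin.castSucc_ne_last]

theorem NFmul_single_last_right (x : Fin (n + 1) → ℂ) :
    NFmul (n + 1) x (Pi.single (Fin.last n) 1) = 0 := by
  cases n with
  | zero => ext i; fin_cases i; simp [NFmul]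
  | succ n => simp [NFmul_succ, Fin.last_pos.ne]

theorem NFmul_snoc (x y : Fin (n + 1) → ℂ) (s t : ℂ) :
    NFmul (n + 2) (Fin.snoc x s) (Fin.snoc y t) =
      Fin.snoc (NFmul (n + 1) x y) (x (Fin.last n) * y 0) := by
  calc NFmul (n + 2) (Fin.snoc x s) (Fin.snoc y t)
      _ = y 0 • Fin.cons 0 x := by simp [NFmul_succ]
      _ = y 0 • Fin.snoc (Fin.cons 0 (Fin.init x)) (x (Fin.last n)) := by
        rw [← Fin.cons_snoc_eq_snoc_cons, Fin.snoc_init_self]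
      _ = Fin.snoc (NFmul (n + 1) x y) (x (Fin.last n) * y 0) := by
        ext i
        refine Fin.lastCases ?_ (fun i => ?_) i <;> simp [NFmul_succ, mul_comm]

variable (n) in
def backwardShift : (Fin (n + 1) → ℂ) →ₗ[ℂ] (Fin (n + 1) → ℂ) where
  toFun x := Fin.snoc (Fin.tail x) 0
  map_add' x y := by ext i; refine Fin.lastCases ?_ (fun i => ?_) i <;> simp [Fin.tail]
  map_smul' c x := by ext i; refine Fin.lastCases ?_ (fun i => ?_) i <;> simp [Fin.tail]

theorem eq_smul_single_zero_add_NFmul_backwardShift (y : Fin (n + 1) → ℂ) :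
    y = y 0 • Pi.single 0 1 + NFmul (n + 1) (backwardShift n y) (Pi.single 0 1) := by
  ext i
  refine Fin.cases ?_ (fun i => ?_) i <;>
    simp [NFmul_single_zero_right, backwardShift, Fin.tail]

theorem backwardShift_NFmul (x y : Fin (n + 1) → ℂ) :
    backwardShift n (NFmul (n + 1) x y) = y 0 • Fin.snoc (Fin.init x) 0 := by
  ext i
  refine Fin.lastCases ?_ (fun i => ?_) i <;> simp [NFmul_succ, backwardShift]

def IsNFCocycle (n k : ℕ) (θ : (Fin n → ℂ) →ₗ[ℂ] (Fin n → ℂ) →ₗ[ℂ] (Fin k → ℂ)) : Prop :=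
  ∀ x y z : Fin n → ℂ, θ x (NFmul n y z) = θ (NFmul n x y) z - θ (NFmul n x z) y

namespace IsNFCocycle

variable {k : ℕ} {θ : (Fin (n + 1) → ℂ) →ₗ[ℂ] (Fin (n + 1) → ℂ) →ₗ[ℂ] (Fin k → ℂ)}
  (hθ : IsNFCocycle (n + 1) k θ)
include hθ

local notation "e₀" => (Pi.single 0 1 : Fin (n + 1) → ℂ)
local notation "eₗ" => (Pi.single (Fin.last n) 1 : Fin (n + 1) → ℂ)

theorem apply_NFmul_single_zero_left (x y : Fin (n + 1) → ℂ) :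
    θ (NFmul (n + 1) x e₀) y = y 0 • θ (NFmul (n + 1) x e₀) e₀ := by
  have h₀ : θ x (NFmul (n + 1) e₀ e₀) = 0 := by rw [hθ, sub_self]
  have h := hθ x e₀ y
  rw [NFmul_eq_smul_NFmul_single_zero e₀ y, map_smul, h₀, smul_zero,
    NFmul_eq_smul_NFmul_single_zero x y, map_smul, LinearMap.smul_apply] at h
  exact sub_eq_zero.mp h.symm

theorem apply_NFmul_single_zero_right (x y : Fin (n + 1) → ℂ) :
    θ x (NFmul (n + 1) y e₀) = 0 := by
  rw [hθ, NFmul_eq_smul_NFmul_single_zero x y, map_smul, LinearMap.smul_apply,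
    hθ.apply_NFmul_single_zero_left x y, sub_self]

theorem apply_eq_smul (x y : Fin (n + 1) → ℂ) : θ x y = y 0 • θ x e₀ := by
  conv_lhs => rw [eq_smul_single_zero_add_NFmul_backwardShift y]
  rw [map_add, map_smul, hθ.apply_NFmul_single_zero_right, add_zero]

theorem eq_coboundary_add (x y : Fin (n + 1) → ℂ) :
    θ x y = (θ.flip e₀ ∘ₗ backwardShift n) (NFmul (n + 1) x y) +
      (x (Fin.last n) * y 0) • θ eₗ e₀ := by
  conv_lhs => rw [hθ.apply_eq_smul, ← Fin.snoc_init_zero_add_smul_single_last x]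
  simp only [LinearMap.comp_apply, LinearMap.flip_apply, backwardShift_NFmul, map_smul,
    map_add, LinearMap.add_apply, LinearMap.smul_apply, smul_add, smul_smul, mul_comm]

theorem single_last_ne_zero
    (hcenter : ∀ z : (Fin (n + 1) → ℂ) × (Fin k → ℂ),
      (∀ w, extMul (n + 1) k (fun x y => θ x y) z w = 0 ∧
        extMul (n + 1) k (fun x y => θ x y) w z = 0) → z.1 = 0) :
    θ eₗ e₀ ≠ 0 := by
  intro hv
  have h := congrFun (hcenter (eₗ, 0) fun w => ⟨?_, ?_⟩) (Fin.last n)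
  · simp at h
  · rw [extMul, NFmul_single_last_left, hθ.apply_eq_smul, hv, smul_zero, Prod.mk_zero_zero]
  · simp [extMul, NFmul_single_last_right, hθ.eq_coboundary_add w.1, hv]

end IsNFCocycle

theorem exists_linearEquiv_extMul_eq_splitMul {k : ℕ}
    {θ : (Fin (n + 1) → ℂ) → (Fin (n + 1) → ℂ) → (Fin (k + 1) → ℂ)}
    (G : (Fin (n + 1) → ℂ) →ₗ[ℂ] (Fin (k + 1) → ℂ)) {v : Fin (k + 1) → ℂ} (hv : v ≠ 0)
    (hθ : ∀ x y, θ x y = G (NFmul (n + 1) x y) + (x (Fin.last n) * y 0) • v) :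
    ∃ f : ((Fin (n + 1) → ℂ) × (Fin (k + 1) → ℂ)) ≃ₗ[ℂ] ((Fin (n + 2) → ℂ) × (Fin k → ℂ)),
      ∀ a b, f (extMul (n + 1) (k + 1) θ a b) = splitMul (n + 2) k (f a) (f b) := by
  obtain ⟨ψ, hψ⟩ := exists_linearEquiv_apply_eq (K := ℂ) hv
    (w := Fin.cons 1 0) fun h => one_ne_zero (congrFun h 0)
  let σ := ψ ≪≫ₗ (Fin.consLinearEquiv ℂ fun _ : Fin (k + 1) => ℂ).symm
  have hσ : σ v = (1, 0) := by simp [σ, hψ]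
  let f := (LinearEquiv.refl ℂ _).skewProd σ (-(σ.toLinearMap ∘ₗ G)) ≪≫ₗ
    (LinearEquiv.prodAssoc ℂ _ _ _).symm ≪≫ₗ
    (Fin.snocLinearEquiv ℂ ℂ (n + 1)).prodCongr (LinearEquiv.refl ℂ _)
  have hf : ∀ x u, f (x, u) = (Fin.snoc x (σ (u - G x)).1, (σ (u - G x)).2) := by
    intro x u
    rw [map_sub, sub_eq_add_neg]
    rfl
  refine ⟨f, fun ⟨x, u⟩ ⟨y, w⟩ => ?_⟩
  rw [extMul, hf, hf, hf, hθ, add_sub_cancel_left, map_smul, hσ]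
  simp [splitMul, NFmul_snoc]

theorem map_iterate_mul_right {A B : Type*} {mulA : A → A → A} {mulB : B → B → B} {g : A → B}
    (hg : ∀ a b, g (mulA a b) = mulB (g a) (g b)) (a b : A) (i : ℕ) :
    g ((fun c => mulA c a)^[i] b) = (fun c => mulB c (g a))^[i] (g b) :=
  Semiconj.iterate_right (fun c => hg c a) i b

theorem iterate_splitMul_apply_of_lt {m k : ℕ} (a b : (Fin m → ℂ) × (Fin k → ℂ)) (i : ℕ)
    (j : Fin m) (hj : (j : ℕ) < i) : ((fun c => splitMul m k c a)^[i] b).1 j = 0 := by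
  induction i generalizing j with
  | zero => omega
  | succ i ih =>
    rw [iterate_succ_apply']
    show NFmul m _ a.1 j = 0
    unfold NFmul
    split_ifs
    · rw [ih _ (by simp only; omega), zero_mul]
    · rfl

theorem iterate_splitMul_eq_zero {m k : ℕ} (hm : 0 < m) (a b : (Fin m → ℂ) × (Fin k → ℂ)) :
    (fun c => splitMul m k c a)^[m] b = 0 := by
  obtain ⟨m, rfl⟩ : ∃ m', m = m' + 1 := ⟨m - 1, by omega⟩
  refine Prod.ext (funext fun j => iterate_splitMul_apply_of_lt a b _ j j.isLt) ?_
  rw [iterate_succ_apply']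
  rfl

theorem iterate_splitMul_single_zero {m k : ℕ} (i : ℕ) (hi : i < m + 1) :
    ((fun c => splitMul (m + 1) k c (Pi.single 0 1, 0))^[i] (Pi.single 0 1, 0)).1 =
      Pi.single ⟨i, hi⟩ 1 := by
  induction i with
  | zero => rfl
  | succ i ih =>
    rw [iterate_succ_apply', splitMul, ih (by omega), NFmul_single_zero_right]
    ext j
    refine Fin.cases ?_ (fun j => ?_) j <;> simp [Fin.init, Pi.single_apply, Fin.ext_iff]

theorem not_exists_linearEquiv_splitMul {m k l : ℕ} (hm : 0 < m) :
    ¬ ∃ g : ((Fin m → ℂ) × (Fin k → ℂ)) ≃ₗ[ℂ] ((Fin (m + 1) → ℂ) × (Fin l → ℂ)),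
      ∀ a b, g (splitMul m k a b) = splitMul (m + 1) l (g a) (g b) := by
  rintro ⟨g, hg⟩
  have h := map_iterate_mul_right hg (g.symm (Pi.single 0 1, 0)) (g.symm (Pi.single 0 1, 0)) m
  rw [iterate_splitMul_eq_zero hm, map_zero, g.apply_symm_apply] at h
  have h_last := congrFun (congrArg Prod.fst h) (Fin.last m)
  rw [iterate_splitMul_single_zero m m.lt_succ_self] at h_last
  exact zero_ne_one (h_last.trans (Pi.single_eq_same _ _))

/-- Every central extension of `NF_n` by a `k`-dimensional abelian `V`
(with `V` the center of the extension) is isomorphic either to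
`NF_n ⊕ ℂ^k` or to `NF_{n+1} ⊕ ℂ^{k-1}`, and these are not isomorphic. -/
theorem NF_central_extensions (n k : ℕ) (hn : 0 < n) (hk : 0 < k)
    (θ : (Fin n → ℂ) →ₗ[ℂ] (Fin n → ℂ) →ₗ[ℂ] (Fin k → ℂ))
    (hcoc : ∀ x y z : Fin n → ℂ,
      θ x (NFmul n y z) = θ (NFmul n x y) z - θ (NFmul n x z) y)
    (hcenter : ∀ z : (Fin n → ℂ) × (Fin k → ℂ),
      (∀ w, extMul n k (fun x y => θ x y) z w = 0 ∧
            extMul n k (fun x y => θ x y) w z = 0) ↔ z.1 = 0) :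
    ((∃ f : ((Fin n → ℂ) × (Fin k → ℂ)) ≃ₗ[ℂ] ((Fin n → ℂ) × (Fin k → ℂ)),
        ∀ a b, f (extMul n k (fun x y => θ x y) a b) = splitMul n k (f a) (f b)) ∨
     (∃ f : ((Fin n → ℂ) × (Fin k → ℂ)) ≃ₗ[ℂ] ((Fin (n+1) → ℂ) × (Fin (k-1) → ℂ)),
        ∀ a b, f (extMul n k (fun x y => θ x y) a b) = splitMul (n+1) (k-1) (f a) (f b))) ∧
    ¬ ∃ g : ((Fin n → ℂ) × (Fin k → ℂ)) ≃ₗ[ℂ] ((Fin (n+1) → ℂ) × (Fin (k-1) → ℂ)),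
        ∀ a b, g (splitMul n k a b) = splitMul (n+1) (k-1) (g a) (g b) := by
  refine ⟨Or.inr ?_, not_exists_linearEquiv_splitMul hn⟩
  obtain ⟨n, rfl⟩ : ∃ m, n = m + 1 := ⟨n - 1, by omega⟩
  obtain ⟨k, rfl⟩ : ∃ m, k = m + 1 := ⟨k - 1, by omega⟩
  have hθ : IsNFCocycle (n + 1) (k + 1) θ := hcoc
  exact exists_linearEquiv_extMul_eq_splitMul _
    (hθ.single_last_ne_zero fun z => (hcenter z).mp) hθ.eq_coboundary_add
end

section
/- For any scalars α_1, ..., α_k not all zero, the (n+k)-dimensional algebra with basis e_1,...,e_n, x_1,...,x_k and products [e_i,e_1]=e_{i+1} for 1 ≤ i ≤ n-1 and [e_n,e_1] = Σ α_i x_i is isomorphic to NF_{n+1} ⊕ C^{k-1}. -/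
/-- The `(n+k)`-dimensional algebra with basis `e_1,…,e_n,x_1,…,x_k`,
`[e_i,e_1] = e_{i+1}` for `1 ≤ i ≤ n-1` and `[e_n,e_1] = Σ α_i x_i`. -/
def extAlphaMul (n k : ℕ) (hn : 0 < n) (α : Fin k → ℂ)
    (a b : (Fin n → ℂ) × (Fin k → ℂ)) : (Fin n → ℂ) × (Fin k → ℂ) :=
  (NFmul n a.1 b.1, (a.1 ⟨n - 1, Nat.sub_lt hn Nat.one_pos⟩ * b.1 ⟨0, hn⟩) • α)

def emb (k : ℕ) (i0 : Fin k) (j : Fin (k-1)) : Fin k :=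
  if (j : ℕ) < (i0 : ℕ) then ⟨j, by have := j.isLt; omega⟩
  else ⟨(j : ℕ) + 1, by have := j.isLt; omega⟩

noncomputable def fwd (n k : ℕ) (α : Fin k → ℂ) (i0 : Fin k)
    (p : (Fin n → ℂ) × (Fin k → ℂ)) : (Fin (n+1) → ℂ) × (Fin (k-1) → ℂ) :=
  (fun j => if h : (j : ℕ) < n then p.1 ⟨j, h⟩ else p.2 i0 / α i0,
   fun j => p.2 (emb k i0 j) - p.2 i0 / α i0 * α (emb k i0 j))

noncomputable def bwd (n k : ℕ) (α : Fin k → ℂ) (i0 : Fin k)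
    (q : (Fin (n+1) → ℂ) × (Fin (k-1) → ℂ)) : (Fin n → ℂ) × (Fin k → ℂ) :=
  (fun i => q.1 ⟨i, by have := i.isLt; omega⟩,
   fun i =>
     if h : (i : ℕ) < (i0 : ℕ) then
       q.2 ⟨i, by have := i0.isLt; omega⟩ + q.1 ⟨n, by omega⟩ * α i
     else if h2 : (i0 : ℕ) < (i : ℕ) then
       q.2 ⟨(i : ℕ) - 1, by have := i.isLt; omega⟩ + q.1 ⟨n, by omega⟩ * α i
     else q.1 ⟨n, by omega⟩ * α i0)

lemma emb_val (k : ℕ) (i0 : Fin k) (j : Fin (k-1)) :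
    ((emb k i0 j : Fin k) : ℕ) = if (j : ℕ) < (i0 : ℕ) then (j : ℕ) else (j : ℕ) + 1 := by
  simp only [emb]; split_ifs <;> rfl

lemma bwd_snd_apply (n k : ℕ) (α : Fin k → ℂ) (i0 : Fin k)
    (q : (Fin (n+1) → ℂ) × (Fin (k-1) → ℂ)) (i : Fin k) :
    (bwd n k α i0 q).2 i =
      if h : (i : ℕ) < (i0 : ℕ) then
        q.2 ⟨i, by have := i0.isLt; omega⟩ + q.1 ⟨n, by omega⟩ * α i
      else if h2 : (i0 : ℕ) < (i : ℕ) then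
        q.2 ⟨(i : ℕ) - 1, by have := i.isLt; omega⟩ + q.1 ⟨n, by omega⟩ * α i
      else q.1 ⟨n, by omega⟩ * α i0 := rfl

lemma left_inv_aux (n k : ℕ) (α : Fin k → ℂ) (i0 : Fin k) (hi0 : α i0 ≠ 0)
    (p : (Fin n → ℂ) × (Fin k → ℂ)) : bwd n k α i0 (fwd n k α i0 p) = p := by
  refine Prod.ext ?_ ?_
  · funext i
    show (fwd n k α i0 p).1 ⟨i, _⟩ = p.1 i
    simp only [fwd]
    rw [dif_pos i.isLt]
  · funext i
    rw [bwd_snd_apply]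
    have hE : (fwd n k α i0 p).1 ⟨n, by omega⟩ = p.2 i0 / α i0 := by
      simp only [fwd]; rw [dif_neg (by omega)]
    rcases Nat.lt_trichotomy (i : ℕ) (i0 : ℕ) with h | h | h
    · rw [dif_pos h, hE]
      have he : emb k i0 ⟨(i : ℕ), by have := i0.isLt; omega⟩ = i := by
        apply Fin.ext; rw [emb_val]; simp only [Fin.val_mk]; (split_ifs <;> omega)
      simp only [fwd, he]
      ring
    · rw [dif_neg (by omega), dif_neg (by omega), hE]
      have : i = i0 := Fin.ext h
      subst this
      field_simp
    · rw [dif_neg (by omega), dif_pos h, hE]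
      have he : emb k i0 ⟨(i : ℕ) - 1, by have := i.isLt; omega⟩ = i := by
        apply Fin.ext; rw [emb_val]; simp only [Fin.val_mk]; (split_ifs <;> omega)
      simp only [fwd, he]
      ring

lemma right_inv_aux (n k : ℕ) (α : Fin k → ℂ) (i0 : Fin k) (hi0 : α i0 ≠ 0)
    (q : (Fin (n+1) → ℂ) × (Fin (k-1) → ℂ)) : fwd n k α i0 (bwd n k α i0 q) = q := by
  have hv0 : (bwd n k α i0 q).2 i0 = q.1 ⟨n, by omega⟩ * α i0 := by
    rw [bwd_snd_apply, dif_neg (by omega), dif_neg (by omega)]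
  refine Prod.ext ?_ ?_
  · funext j
    show (if h : (j : ℕ) < n then (bwd n k α i0 q).1 ⟨j, h⟩
      else (bwd n k α i0 q).2 i0 / α i0) = q.1 j
    by_cases h : (j : ℕ) < n
    · rw [dif_pos h]
      exact congrArg q.1 (Fin.ext rfl)
    · rw [dif_neg h, hv0, mul_div_cancel_right₀ _ hi0]
      exact congrArg q.1 (Fin.ext (by have := j.isLt; simp only [Fin.val_mk]; omega))
  · funext j
    show (bwd n k α i0 q).2 (emb k i0 j) -
        (bwd n k α i0 q).2 i0 / α i0 * α (emb k i0 j) = q.2 j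
    rw [hv0, mul_div_cancel_right₀ _ hi0]
    rcases Nat.lt_or_ge (j : ℕ) (i0 : ℕ) with h | h
    · have he : ((emb k i0 j : Fin k) : ℕ) = (j : ℕ) := by rw [emb_val, if_pos h]
      rw [bwd_snd_apply, dif_pos (by omega)]
      have : (⟨((emb k i0 j : Fin k) : ℕ), by have := i0.isLt; omega⟩ : Fin (k-1)) = j :=
        Fin.ext (by simp [he])
      rw [this]; ring
    · have he : ((emb k i0 j : Fin k) : ℕ) = (j : ℕ) + 1 := by rw [emb_val, if_neg (by omega)]
      rw [bwd_snd_apply, dif_neg (by omega), dif_pos (by omega)]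
      have : (⟨((emb k i0 j : Fin k) : ℕ) - 1, by have := (emb k i0 j).isLt; omega⟩ : Fin (k-1)) = j :=
        Fin.ext (by simp [he])
      rw [this]; ring

lemma mul_aux (n k : ℕ) (hn : 0 < n) (α : Fin k → ℂ) (i0 : Fin k) (hi0 : α i0 ≠ 0)
    (a b : (Fin n → ℂ) × (Fin k → ℂ)) :
    fwd n k α i0 (extAlphaMul n k hn α a b) =
      splitMul (n+1) (k-1) (fwd n k α i0 a) (fwd n k α i0 b) := by
  have hb0 : (fwd n k α i0 b).1 ⟨0, by omega⟩ = b.1 ⟨0, hn⟩ := dif_pos hn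
  refine Prod.ext ?_ ?_
  · funext j
    show (if h : (j : ℕ) < n then NFmul n a.1 b.1 ⟨j, h⟩
        else ((a.1 ⟨n-1, Nat.sub_lt hn Nat.one_pos⟩ * b.1 ⟨0, hn⟩) • α) i0 / α i0) =
      NFmul (n+1) (fwd n k α i0 a).1 (fwd n k α i0 b).1 j
    by_cases h1 : 1 ≤ (j : ℕ)
    · have hR : NFmul (n+1) (fwd n k α i0 a).1 (fwd n k α i0 b).1 j
          = (fwd n k α i0 a).1 ⟨(j : ℕ) - 1, by have := j.isLt; omega⟩ *
            (fwd n k α i0 b).1 ⟨0, by omega⟩ := if_pos h1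
      rw [hR, hb0]
      by_cases h : (j : ℕ) < n
      · rw [dif_pos h]
        have hL : NFmul n a.1 b.1 ⟨(j : ℕ), h⟩
            = a.1 ⟨(j : ℕ) - 1, by omega⟩ * b.1 ⟨0, hn⟩ := if_pos h1
        have ha : (fwd n k α i0 a).1 ⟨(j : ℕ) - 1, by have := j.isLt; omega⟩
            = a.1 ⟨(j : ℕ) - 1, by omega⟩ := dif_pos (by show (j : ℕ) - 1 < n; omega)
        rw [hL, ha]
      · have hj : (j : ℕ) = n := by have := j.isLt; omega
        rw [dif_neg h]
        have ha : (fwd n k α i0 a).1 ⟨(j : ℕ) - 1, by have := j.isLt; omega⟩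
            = a.1 ⟨n - 1, Nat.sub_lt hn Nat.one_pos⟩ := by
          rw [show (⟨(j : ℕ) - 1, by have := j.isLt; omega⟩ : Fin (n+1))
              = ⟨n - 1, by omega⟩ from Fin.ext (by simp only [Fin.val_mk]; omega)]
          exact dif_pos (by show n - 1 < n; omega)
        rw [ha]
        simp only [Pi.smul_apply, smul_eq_mul]
        rw [mul_div_assoc, div_self hi0, mul_one]
    · have hj : (j : ℕ) = 0 := by omega
      rw [dif_pos (show (j : ℕ) < n by omega)]
      have hL : NFmul n a.1 b.1 ⟨(j : ℕ), by omega⟩ = 0 := if_neg (by show ¬ 1 ≤ (j : ℕ); omega)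
      have hR : NFmul (n+1) (fwd n k α i0 a).1 (fwd n k α i0 b).1 j = 0 := if_neg h1
      rw [hL, hR]
  · funext j
    show ((a.1 ⟨n-1, Nat.sub_lt hn Nat.one_pos⟩ * b.1 ⟨0, hn⟩) • α) (emb k i0 j) -
        ((a.1 ⟨n-1, Nat.sub_lt hn Nat.one_pos⟩ * b.1 ⟨0, hn⟩) • α) i0 / α i0 *
          α (emb k i0 j) = (0 : Fin (k-1) → ℂ) j
    simp only [Pi.smul_apply, smul_eq_mul, Pi.zero_apply]
    rw [mul_div_assoc, div_self hi0, mul_one]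
    ring


/-- If `α ≠ 0` then the algebra above is isomorphic to `NF_{n+1} ⊕ ℂ^{k-1}`. -/
theorem extAlpha_iso_NF_succ (n k : ℕ) (hn : 0 < n) (α : Fin k → ℂ) (hα : α ≠ 0) :
    ∃ f : ((Fin n → ℂ) × (Fin k → ℂ)) ≃ₗ[ℂ] ((Fin (n+1) → ℂ) × (Fin (k-1) → ℂ)),
      ∀ a b, f (extAlphaMul n k hn α a b) = splitMul (n+1) (k-1) (f a) (f b) := by
  obtain ⟨i0, hi0⟩ : ∃ i, α i ≠ 0 := Function.ne_iff.mp hα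
  refine ⟨{ toFun := fwd n k α i0, invFun := bwd n k α i0,
            map_add' := ?_, map_smul' := ?_,
            left_inv := left_inv_aux n k α i0 hi0,
            right_inv := right_inv_aux n k α i0 hi0 }, ?_⟩
  · intro p q
    simp only [fwd, Prod.fst_add, Prod.snd_add, Pi.add_apply, Prod.mk_add_mk, Prod.mk.injEq]
    constructor <;> funext j <;> simp only [Pi.add_apply]
    · split_ifs <;> ring
    · ring
  · intro c p
    simp only [fwd, Prod.smul_fst, Prod.smul_snd, Pi.smul_apply, Prod.smul_mk, Prod.mk.injEq,
      smul_eq_mul, RingHom.id_apply]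
    constructor <;> funext j <;> simp only [Pi.smul_apply, smul_eq_mul]
    · split_ifs <;> ring
    · ring
  · intro a b
    exact mul_aux n k hn α i0 hi0 a b
end

section
/- For the algebra F_n^1 and a k-dimensional space V with basis x_1,...,x_k, the space of central 2-cocycles ZL^2(F_n^1, V) has basis given by the maps θ_{i,j}(e_i,e_1)=x_j (1 ≤ i ≤ n), θ_{n+1,j}(e_1,e_2)=x_j, and θ_{n+2,j}(e_2,e_2)=x_j, for 1 ≤ j ≤ k. -/
/-- Multiplication of the algebra `F_n^1`: `[e_1,e_1] = e_3`,
`[e_i,e_1] = e_{i+1}` for `2 ≤ i ≤ n-1`, other products zero. -/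
def F1mul (n : ℕ) (x y : Fin n → ℂ) : Fin n → ℂ :=
  fun k =>
    if h : (k : ℕ) = 2 then
      (x ⟨0, by have := k.isLt; omega⟩ + x ⟨1, by have := k.isLt; omega⟩) *
        y ⟨0, by have := k.isLt; omega⟩
    else if h2 : 3 ≤ (k : ℕ) then
      x ⟨(k : ℕ) - 1, by have := k.isLt; omega⟩ * y ⟨0, by have := k.isLt; omega⟩
    else 0

/-- The "shift" map: `F1mul n x y = y 0 • Sh n x`. -/
def Sh (n : ℕ) (x : Fin n → ℂ) : Fin n → ℂ :=
  fun k =>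
    if _ : (k : ℕ) = 2 then
      x ⟨0, by have := k.isLt; omega⟩ + x ⟨1, by have := k.isLt; omega⟩
    else if _ : 3 ≤ (k : ℕ) then
      x ⟨(k : ℕ) - 1, by have := k.isLt; omega⟩
    else 0

lemma F1mul_eq (n : ℕ) (hn : 0 < n) (x y : Fin n → ℂ) :
    F1mul n x y = y ⟨0, hn⟩ • Sh n x := by
  funext m
  simp only [F1mul, Sh, Pi.smul_apply, smul_eq_mul]
  split_ifs <;> ring

lemma Sh_apply_zero (n : ℕ) (hn : 0 < n) (x : Fin n → ℂ) : Sh n x ⟨0, hn⟩ = 0 := by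
  simp [Sh]

lemma Sh_apply_one (n : ℕ) (hn : 1 < n) (x : Fin n → ℂ) : Sh n x ⟨1, hn⟩ = 0 := by
  simp [Sh]

lemma Sh_single_small (n : ℕ) (hn : 4 ≤ n) (a : Fin n) (ha : (a : ℕ) ≤ 1) :
    Sh n (Pi.single a 1) = Pi.single (⟨2, by omega⟩ : Fin n) 1 := by
  funext m
  have hm := m.isLt
  have hav := a.isLt
  simp only [Sh, Pi.single_apply, Fin.ext_iff]
  split_ifs <;> first | omega | (exfalso; omega) | norm_num

lemma Sh_single_mid (n : ℕ) (a : Fin n) (ha : 2 ≤ (a : ℕ)) (ha2 : (a : ℕ) + 1 < n) :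
    Sh n (Pi.single a 1) = Pi.single (⟨(a : ℕ) + 1, ha2⟩ : Fin n) 1 := by
  funext m
  have hm := m.isLt
  simp only [Sh, Pi.single_apply, Fin.ext_iff]
  split_ifs <;> first | omega | (exfalso; omega) | norm_num

lemma Sh_single_top (n : ℕ) (hn : 4 ≤ n) (a : Fin n) (ha : (a : ℕ) + 1 = n) :
    Sh n (Pi.single a 1) = 0 := by
  funext m
  have hm := m.isLt
  simp only [Sh, Pi.single_apply, Fin.ext_iff, Pi.zero_apply]
  split_ifs <;> first | omega | (exfalso; omega) | norm_num

lemma single_eq_smul {n : ℕ} (j : Fin n) (c : ℂ) :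
    (Pi.single j c : Fin n → ℂ) = c • (Pi.single j 1 : Fin n → ℂ) := by
  funext m
  rw [Pi.smul_apply, Pi.single_apply, Pi.single_apply]
  split_ifs <;> simp

lemma apply_single_right {n k : ℕ} (θ : (Fin n → ℂ) →ₗ[ℂ] (Fin n → ℂ) →ₗ[ℂ] (Fin k → ℂ))
    (v w : Fin n → ℂ) : θ v w = ∑ j, w j • θ v (Pi.single j 1) := by
  conv_lhs => rw [← Finset.univ_sum_single w]
  rw [map_sum]
  refine Finset.sum_congr rfl fun j _ => ?_
  rw [single_eq_smul, map_smul]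

lemma apply_single_left {n k : ℕ} (θ : (Fin n → ℂ) →ₗ[ℂ] (Fin n → ℂ) →ₗ[ℂ] (Fin k → ℂ))
    (v w : Fin n → ℂ) : θ v w = ∑ i, v i • θ (Pi.single i 1) w := by
  conv_lhs => rw [← Finset.univ_sum_single v]
  rw [map_sum, LinearMap.sum_apply]
  refine Finset.sum_congr rfl fun i _ => ?_
  rw [single_eq_smul, map_smul, LinearMap.smul_apply]

/-- A bilinear map `θ` with values in `V = ℂ^k` is a central 2-cocycle of
`F_n^1` iff it vanishes on all pairs of basis vectors except the pairs
`(e_i, e_1)` (`1 ≤ i ≤ n`), `(e_1, e_2)` and `(e_2, e_2)`; i.e.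
`ZL^2(F_n^1, V)` has basis `θ_{i,j}(e_i,e_1) = x_j`,
`θ_{n+1,j}(e_1,e_2) = x_j`, `θ_{n+2,j}(e_2,e_2) = x_j`. -/
theorem F1_cocycle_basis (n k : ℕ) (hn : 4 ≤ n)
    (θ : (Fin n → ℂ) →ₗ[ℂ] (Fin n → ℂ) →ₗ[ℂ] (Fin k → ℂ)) :
    (∀ x y z : Fin n → ℂ,
        θ x (F1mul n y z) = θ (F1mul n x y) z - θ (F1mul n x z) y) ↔
      (∀ i j : Fin n, ¬((j : ℕ) = 0 ∨ ((j : ℕ) = 1 ∧ (i : ℕ) ≤ 1)) →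
        θ (Pi.single i (1 : ℂ)) (Pi.single j (1 : ℂ)) = 0) := by
  have h0 : 0 < n := by omega
  have h1 : 1 < n := by omega
  have h2 : 2 < n := by omega
  constructor
  · -- forward direction
    intro C i j hij
    have mulsingle0 : ∀ a : Fin n,
        F1mul n (Pi.single a 1) (Pi.single (⟨0, h0⟩ : Fin n) 1) = Sh n (Pi.single a 1) := by
      intro a
      rw [F1mul_eq n h0, Pi.single_eq_same, one_smul]
    have mulzero : ∀ (x : Fin n → ℂ) (b : Fin n), (b : ℕ) ≠ 0 →
        F1mul n x (Pi.single b 1) = 0 := by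
      intro x b hb
      rw [F1mul_eq n h0,
        Pi.single_eq_of_ne (fun he => hb (by rw [← he])), zero_smul]
    have stepA : ∀ a : Fin n, θ (Pi.single a 1) (Pi.single (⟨2, h2⟩ : Fin n) 1) = 0 := by
      intro a
      have hC := C (Pi.single a 1) (Pi.single (⟨0, h0⟩ : Fin n) 1)
        (Pi.single (⟨0, h0⟩ : Fin n) 1)
      rw [sub_self, mulsingle0, Sh_single_small n hn _ (by norm_num)] at hC
      exact hC
    have stepB : ∀ m : ℕ, 2 ≤ m → ∀ (hm : m < n) (a : Fin n),
        θ (Pi.single a 1) (Pi.single (⟨m, hm⟩ : Fin n) 1) = 0 := by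
      intro m hm2
      induction m, hm2 using Nat.le_induction with
      | base => intro hm a; exact stepA a
      | succ m hm ih =>
        intro hsm a
        have hmn : m < n := by omega
        have hC := C (Pi.single a 1) (Pi.single (⟨m, hmn⟩ : Fin n) 1)
          (Pi.single (⟨0, h0⟩ : Fin n) 1)
        rw [mulzero _ (⟨m, hmn⟩ : Fin n) (by simp; omega), map_zero,
          LinearMap.zero_apply, mulsingle0, mulsingle0,
          Sh_single_mid n (⟨m, hmn⟩ : Fin n) (by simpa using hm) (by simpa using hsm)] at hC
        have hSh : θ (Sh n (Pi.single a 1)) (Pi.single (⟨m, hmn⟩ : Fin n) 1) = 0 := by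
          rcases le_or_gt (a : ℕ) 1 with ha | ha
          · rw [Sh_single_small n hn a ha]; exact ih hmn _
          · rcases lt_or_eq_of_le (by omega : (a : ℕ) + 1 ≤ n) with ha2 | ha2
            · rw [Sh_single_mid n a (by omega) ha2]; exact ih hmn _
            · rw [Sh_single_top n hn a ha2, map_zero, LinearMap.zero_apply]
        rw [hSh] at hC
        simpa using hC
    obtain ⟨hj0, hj1⟩ := not_or.mp hij
    rcases eq_or_ne (j : ℕ) 1 with hj | hj
    · have hi2 : 2 ≤ (i : ℕ) := by
        rcases le_or_gt (i : ℕ) 1 with h | h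
        · exact absurd ⟨hj, h⟩ hj1
        · omega
      have hilt := i.isLt
      have him : (i : ℕ) - 1 < n := by omega
      have hC := C (Pi.single (⟨(i : ℕ) - 1, him⟩ : Fin n) 1)
        (Pi.single (⟨1, h1⟩ : Fin n) 1) (Pi.single (⟨0, h0⟩ : Fin n) 1)
      rw [mulzero _ (⟨1, h1⟩ : Fin n) (by norm_num), map_zero, LinearMap.zero_apply,
        mulsingle0, mulsingle0, Sh_single_small n hn (⟨1, h1⟩ : Fin n) (by norm_num)] at hC
      rw [stepA (⟨(i : ℕ) - 1, him⟩ : Fin n), zero_sub] at hC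
      have hzero := neg_eq_zero.mp hC.symm
      have hSh : Sh n (Pi.single (⟨(i : ℕ) - 1, him⟩ : Fin n) 1) = Pi.single i 1 := by
        rcases eq_or_lt_of_le hi2 with h | h
        · rw [Sh_single_small n hn (⟨(i : ℕ) - 1, him⟩ : Fin n)
            (by show (i : ℕ) - 1 ≤ 1; omega)]
          have he : (⟨2, by omega⟩ : Fin n) = i :=
            Fin.ext (show (2 : ℕ) = (i : ℕ) by omega)
          rw [he]
        · rw [Sh_single_mid n (⟨(i : ℕ) - 1, him⟩ : Fin n)
            (by show 2 ≤ (i : ℕ) - 1; omega) (by show (i : ℕ) - 1 + 1 < n; omega)]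
          have he : (⟨(i : ℕ) - 1 + 1, by omega⟩ : Fin n) = i :=
            Fin.ext (show (i : ℕ) - 1 + 1 = (i : ℕ) by omega)
          rw [he]
      rw [hSh] at hzero
      rw [show j = (⟨1, h1⟩ : Fin n) from Fin.ext hj]
      exact hzero
    · have hj2 : 2 ≤ (j : ℕ) := by omega
      have := stepB (j : ℕ) hj2 j.isLt i
      simpa using this
  · -- reverse direction
    intro H x y z
    have key1 : ∀ (v : Fin n → ℂ) (j : Fin n), 2 ≤ (j : ℕ) → θ v (Pi.single j 1) = 0 := by
      intro v j hj
      rw [apply_single_left]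
      refine Finset.sum_eq_zero fun i _ => ?_
      rw [H i j (by omega), smul_zero]
    have key2 : ∀ (v : Fin n → ℂ), v ⟨0, h0⟩ = 0 → v ⟨1, h1⟩ = 0 →
        θ v (Pi.single (⟨1, h1⟩ : Fin n) 1) = 0 := by
      intro v hv0 hv1
      rw [apply_single_left]
      refine Finset.sum_eq_zero fun i _ => ?_
      rcases lt_or_ge (i : ℕ) 2 with hi | hi
      · rcases (by omega : (i : ℕ) = 0 ∨ (i : ℕ) = 1) with h | h
        · rw [show i = (⟨0, h0⟩ : Fin n) from Fin.ext h, hv0, zero_smul]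
        · rw [show i = (⟨1, h1⟩ : Fin n) from Fin.ext h, hv1, zero_smul]
      · rw [H i ⟨1, h1⟩ (by simp only [not_or]; exact ⟨by omega, by rintro ⟨-, hle⟩; omega⟩),
          smul_zero]
    have key3 : ∀ (v w : Fin n → ℂ), w ⟨0, h0⟩ = 0 → w ⟨1, h1⟩ = 0 → θ v w = 0 := by
      intro v w hw0 hw1
      rw [apply_single_right]
      refine Finset.sum_eq_zero fun j _ => ?_
      rcases lt_or_ge (j : ℕ) 2 with hj | hj
      · rcases (by omega : (j : ℕ) = 0 ∨ (j : ℕ) = 1) with h | h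
        · rw [show j = (⟨0, h0⟩ : Fin n) from Fin.ext h, hw0, zero_smul]
        · rw [show j = (⟨1, h1⟩ : Fin n) from Fin.ext h, hw1, zero_smul]
      · rw [key1 v j hj, smul_zero]
    have key4 : ∀ (v w : Fin n → ℂ), v ⟨0, h0⟩ = 0 → v ⟨1, h1⟩ = 0 →
        θ v w = w ⟨0, h0⟩ • θ v (Pi.single (⟨0, h0⟩ : Fin n) 1) := by
      intro v w hv0 hv1
      rw [apply_single_right]
      rw [Finset.sum_eq_single (⟨0, h0⟩ : Fin n)]
      · intro j _ hj
        rcases lt_or_ge (j : ℕ) 2 with hjlt | hjge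
        · have : (j : ℕ) = 1 := by
            rcases (by omega : (j : ℕ) = 0 ∨ (j : ℕ) = 1) with h | h
            · exact absurd (Fin.ext h) hj
            · exact h
          rw [show j = (⟨1, h1⟩ : Fin n) from Fin.ext this, key2 v hv0 hv1, smul_zero]
        · rw [key1 v j hjge, smul_zero]
      · intro habs
        exact absurd (Finset.mem_univ _) habs
    rw [F1mul_eq n h0 y z, F1mul_eq n h0 x y, F1mul_eq n h0 x z, map_smul,
      map_smul, LinearMap.smul_apply, map_smul, LinearMap.smul_apply]
    rw [key3 x (Sh n y) (Sh_apply_zero n h0 y) (Sh_apply_one n h1 y), smul_zero]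
    rw [key4 (Sh n x) z (Sh_apply_zero n h0 x) (Sh_apply_one n h1 x),
      key4 (Sh n x) y (Sh_apply_zero n h0 x) (Sh_apply_one n h1 x)]
    rw [smul_comm (y ⟨0, h0⟩) (z ⟨0, h0⟩), sub_self]
end

section
/- In the (n+1)-dimensional family F_{n+1}^1(0,...,0,α_4,α_3) with bracket [e_1,e_1]=e_3, [e_i,e_1]=e_{i+1} for 2 ≤ i ≤ n, [e_1,e_2]=α_3 e_{n+1}, [e_2,e_2]=α_4 e_{n+1}: if α_4 = 0 and α_3 ≠ 0, then the algebra is isomorphic to the one with parameters (α_4, α_3) = (0, 1), via the basis change with A = α_3^{1/(n-2)}. -/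
/-- The `(n+1)`-dimensional family `F_{n+1}^1(0,…,0,α_4,α_3)`:
`[e_1,e_1]=e_3`, `[e_2,e_1]=e_3`, `[e_i,e_1]=e_{i+1}` for `3 ≤ i ≤ n`,
`[e_1,e_2]=α_3 e_{n+1}`, `[e_2,e_2]=α_4 e_{n+1}`, other products zero. -/
def famMul (n : ℕ) (hn : 4 ≤ n) (α3 α4 : ℂ) (x y : Fin (n+1) → ℂ) :
    Fin (n+1) → ℂ :=
  fun k =>
    if h : (k : ℕ) = 2 then
      (x ⟨0, by omega⟩ + x ⟨1, by omega⟩) * y ⟨0, by omega⟩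
    else if h2 : 3 ≤ (k : ℕ) ∧ (k : ℕ) ≤ n - 1 then
      x ⟨(k : ℕ) - 1, by have := k.isLt; omega⟩ * y ⟨0, by omega⟩
    else if h3 : (k : ℕ) = n then
      x ⟨n - 1, by omega⟩ * y ⟨0, by omega⟩ +
        α3 * (x ⟨0, by omega⟩ * y ⟨1, by omega⟩) +
        α4 * (x ⟨1, by omega⟩ * y ⟨1, by omega⟩)
    else 0

/-- If `α_4 = 0` and `α_3 ≠ 0`, the algebra `F_{n+1}^1(0,…,0,α_4,α_3)` is
isomorphic to the one with parameters `(α_4,α_3) = (0,1)` (via the basis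
change with `A = α_3^{1/(n-2)}`). -/
theorem fam_alpha4_zero_iso (n : ℕ) (hn : 4 ≤ n) (α3 : ℂ) (hα3 : α3 ≠ 0) :
    ∃ f : (Fin (n+1) → ℂ) ≃ₗ[ℂ] (Fin (n+1) → ℂ),
      ∀ x y, f (famMul n hn α3 0 x y) = famMul n hn 1 0 (f x) (f y) := by
  obtain ⟨c, hc⟩ : ∃ c : ℂ, c ^ (n - 2) = α3⁻¹ :=
    IsAlgClosed.exists_pow_nat_eq _ (by omega : 0 < n - 2)
  have hc0 : c ≠ 0 := by
    intro h
    rw [h, zero_pow (by omega : n - 2 ≠ 0)] at hc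
    exact hα3 (by simpa using hc.symm)
  set g : Fin (n+1) → ℂ := fun k => c ^ (max (k : ℕ) 1) with hgdef
  have hg : ∀ k, g k ≠ 0 := fun k => pow_ne_zero _ hc0
  have key : c ^ n * α3 = c ^ 2 := by
    have h1 : c ^ n = c ^ 2 * c ^ (n - 2) := by
      rw [← pow_add]; congr 1; omega
    rw [h1, mul_assoc, hc, inv_mul_cancel₀ hα3, mul_one]
  have hpow : c ^ n = c ^ (n - 1) * c := by
    rw [← pow_succ]; congr 1; omega
  refine ⟨{ toFun := fun x k => g k * x k
            invFun := fun x k => (g k)⁻¹ * x k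
            map_add' := by intro x y; funext k; simp [mul_add]
            map_smul' := by intro a x; funext k; simp [smul_eq_mul]; ring
            left_inv := by
              intro x; funext k
              simp only []
              rw [← mul_assoc, inv_mul_cancel₀ (hg k), one_mul]
            right_inv := by
              intro x; funext k
              simp only []
              rw [← mul_assoc, mul_inv_cancel₀ (hg k), one_mul] }, ?_⟩
  intro x y
  funext k
  show g k * famMul n hn α3 0 x y k
      = famMul n hn 1 0 (fun j => g j * x j) (fun j => g j * y j) k
  unfold famMul
  split_ifs with h1 h2 h3
  · simp only [hgdef, h1, Fin.mk_zero, Fin.mk_one]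
    norm_num
    ring
  · simp only [hgdef]
    have hmax1 : max (k : ℕ) 1 = (k : ℕ) := by omega
    have hmax2 : max ((k : ℕ) - 1) 1 = (k : ℕ) - 1 := by omega
    rw [hmax1, hmax2]
    simp only [Fin.mk_zero, Fin.mk_one]
    norm_num
    have hk : c ^ (k : ℕ) = c ^ ((k : ℕ) - 1) * c := by
      rw [← pow_succ]; congr 1; omega
    rw [hk]; ring
  · simp only [hgdef, h3]
    have hmax1 : max n 1 = n := by omega
    have hmax2 : max (n - 1) 1 = n - 1 := by omega
    rw [hmax1, hmax2]
    simp only [Fin.mk_zero, Fin.mk_one]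
    norm_num
    linear_combination (x ⟨n - 1, by omega⟩ * y 0) * hpow + (x 0 * y ⟨1, by omega⟩) * key
  · simp
end

section
/- In the family L(α_3,α_4) with α_4 ≠ 0 (notation as in context), the algebra is isomorphic to L(1,1) if α_3 = α_4, and to L(0,1) if α_3 ≠ α_4; moreover L(1,1) and L(0,1) are not isomorphic. -/
section famMul
variable {n : ℕ} {hn : 4 ≤ n} {α3 α4 : ℂ} {x y : Fin (n+1) → ℂ}

lemma famMul_apply_zero : famMul n hn α3 α4 x y ⟨0, by omega⟩ = 0 := by
  simp only [famMul, Fin.val_mk]; split_ifs <;> first | rfl | contradiction | omega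

lemma famMul_apply_one : famMul n hn α3 α4 x y ⟨1, by omega⟩ = 0 := by
  simp only [famMul, Fin.val_mk]; split_ifs <;> first | rfl | contradiction | omega

lemma famMul_apply_two :
    famMul n hn α3 α4 x y ⟨2, by omega⟩ =
      (x ⟨0, by omega⟩ + x ⟨1, by omega⟩) * y ⟨0, by omega⟩ := by
  simp [famMul]

lemma famMul_apply_of_three_le_of_lt {k : ℕ} (h3 : 3 ≤ k) (hk : k < n) :
    famMul n hn α3 α4 x y ⟨k, by omega⟩ = x ⟨k - 1, by omega⟩ * y ⟨0, by omega⟩ := by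
  simp only [famMul, Fin.val_mk]; split_ifs <;> first | rfl | contradiction | omega

lemma famMul_apply_last :
    famMul n hn α3 α4 x y ⟨n, by omega⟩ =
      x ⟨n - 1, by omega⟩ * y ⟨0, by omega⟩ + α3 * (x ⟨0, by omega⟩ * y ⟨1, by omega⟩) +
        α4 * (x ⟨1, by omega⟩ * y ⟨1, by omega⟩) := by
  simp only [famMul]; split_ifs <;> first | rfl | contradiction | omega

end famMul

/-- The coordinate vector `x` is sent to `∑ x_k e_{k+1}'` (see the module docstring), written in
the standard basis of `L(a₃, a₄)`. -/
def basisChange (n : ℕ) (hn : 4 ≤ n) (A B a3 a4 : ℂ) :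
    (Fin (n+1) → ℂ) →ₗ[ℂ] (Fin (n+1) → ℂ) where
  toFun x k :=
    if (k : ℕ) = 0 then A * x ⟨0, by omega⟩
    else if (k : ℕ) = 1 then B * x ⟨0, by omega⟩ + (A + B) * x ⟨1, by omega⟩
    else A ^ ((k : ℕ) - 1) * (A + B) * x k
      + (if (k : ℕ) = n - 1 then B * (a3 - a4) * x ⟨1, by omega⟩ else 0)
      + (if (k : ℕ) = n then B * (A * a3 + B * a4) * x ⟨2, by omega⟩ else 0)
  map_add' x y := by
    funext k
    simp only [Pi.add_apply]
    split_ifs <;> ring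
  map_smul' c x := by
    funext k
    simp only [Pi.smul_apply, smul_eq_mul, RingHom.id_apply]
    split_ifs <;> ring

section basisChange
variable {n : ℕ} {hn : 4 ≤ n} {A B a3 a4 : ℂ}

lemma basisChange_apply_zero (x : Fin (n+1) → ℂ) :
    basisChange n hn A B a3 a4 x ⟨0, by omega⟩ = A * x ⟨0, by omega⟩ := rfl

lemma basisChange_apply_one (x : Fin (n+1) → ℂ) :
    basisChange n hn A B a3 a4 x ⟨1, by omega⟩ = B * x ⟨0, by omega⟩ + (A + B) * x ⟨1, by omega⟩ :=
  rfl

lemma basisChange_apply_of_two_le (x : Fin (n+1) → ℂ) {k : ℕ} (h2 : 2 ≤ k) (hk : k < n + 1) :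
    basisChange n hn A B a3 a4 x ⟨k, hk⟩ =
      A ^ (k - 1) * (A + B) * x ⟨k, hk⟩
        + (if k = n - 1 then B * (a3 - a4) * x ⟨1, by omega⟩ else 0)
        + (if k = n then B * (A * a3 + B * a4) * x ⟨2, by omega⟩ else 0) := by
  simp only [basisChange, LinearMap.coe_mk, AddHom.coe_mk]
  rw [if_neg (by omega), if_neg (by omega)]

lemma basisChange_injective (hA : A ≠ 0) (hAB : A + B ≠ 0) :
    Function.Injective (basisChange n hn A B a3 a4) := by
  rw [← LinearMap.ker_eq_bot, LinearMap.ker_eq_bot']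
  intro x hx
  have hx_at : ∀ k (hk : k < n + 1), basisChange n hn A B a3 a4 x ⟨k, hk⟩ = 0 :=
    fun k hk => congrFun hx ⟨k, hk⟩
  have hx0 : x ⟨0, by omega⟩ = 0 := by
    have := hx_at 0 (by omega)
    rw [basisChange_apply_zero] at this
    simpa [hA] using this
  have hx1 : x ⟨1, by omega⟩ = 0 := by
    have := hx_at 1 (by omega)
    rw [basisChange_apply_one, hx0] at this
    simpa [hAB] using this
  have hx2 : x ⟨2, by omega⟩ = 0 := by
    have := hx_at 2 (by omega)
    rw [basisChange_apply_of_two_le x le_rfl, if_neg (by omega), if_neg (by omega)] at this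
    simpa [hA, hAB] using this
  funext ⟨k, hk⟩
  obtain rfl | rfl | h2 : k = 0 ∨ k = 1 ∨ 2 ≤ k := by omega
  · exact hx0
  · exact hx1
  · have := hx_at k hk
    rw [basisChange_apply_of_two_le x h2, hx1, hx2] at this
    simpa [hA, hAB] using this

lemma basisChange_famMul {α3 α4 : ℂ} (h3 : A * a3 + B * a4 = A ^ (n - 1) * α3)
    (h4 : (A + B) * a4 = A ^ (n - 1) * α4) (x y : Fin (n+1) → ℂ) :
    basisChange n hn A B a3 a4 (famMul n hn α3 α4 x y) =
      famMul n hn a3 a4 (basisChange n hn A B a3 a4 x) (basisChange n hn A B a3 a4 y) := by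
  funext ⟨k, hk⟩
  obtain rfl | rfl | rfl | ⟨h3k, hkn⟩ | rfl :
      k = 0 ∨ k = 1 ∨ k = 2 ∨ (3 ≤ k ∧ k < n) ∨ n = k := by omega
  · rw [basisChange_apply_zero, famMul_apply_zero, famMul_apply_zero, mul_zero]
  · rw [basisChange_apply_one, famMul_apply_zero, famMul_apply_one, famMul_apply_one]
    ring
  · rw [basisChange_apply_of_two_le _ le_rfl, if_neg (by omega), if_neg (by omega),
      famMul_apply_two, famMul_apply_two, basisChange_apply_zero, basisChange_apply_zero,
      basisChange_apply_one]
    ring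
  · have hpow : A ^ (k - 1) = A ^ (k - 1 - 1) * A := by
      rw [← pow_succ]; congr 1; omega
    rw [basisChange_apply_of_two_le _ (by omega), famMul_apply_one, mul_zero, ite_self,
      if_neg (by omega), famMul_apply_of_three_le_of_lt h3k hkn,
      famMul_apply_of_three_le_of_lt h3k hkn, basisChange_apply_zero,
      basisChange_apply_of_two_le _ (by omega), if_neg (by omega), if_neg (by omega)]
    linear_combination (A + B) * x ⟨k - 1, by omega⟩ * y ⟨0, by omega⟩ * hpow
  · have hpow : A ^ (n - 1) = A ^ (n - 1 - 1) * A := by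
      rw [← pow_succ]; congr 1; omega
    rw [basisChange_apply_of_two_le _ (by omega), if_neg (by omega), if_pos rfl,
      famMul_apply_last, famMul_apply_last, famMul_apply_two,
      basisChange_apply_of_two_le _ (by omega), if_pos rfl, if_neg (by omega),
      basisChange_apply_zero, basisChange_apply_zero, basisChange_apply_one,
      basisChange_apply_one]
    linear_combination (A + B) * x ⟨n - 1, by omega⟩ * y ⟨0, by omega⟩ * hpow
      - (A + B) * x ⟨0, by omega⟩ * y ⟨1, by omega⟩ * h3
      - (A + B) * x ⟨1, by omega⟩ * y ⟨1, by omega⟩ * h4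

lemma exists_famMul_iso_of_transform {α3 α4 : ℂ} (hA : A ≠ 0) (hAB : A + B ≠ 0)
    (h3 : A * a3 + B * a4 = A ^ (n - 1) * α3) (h4 : (A + B) * a4 = A ^ (n - 1) * α4) :
    ∃ f : (Fin (n+1) → ℂ) ≃ₗ[ℂ] (Fin (n+1) → ℂ),
      ∀ x y, f (famMul n hn α3 α4 x y) = famMul n hn a3 a4 (f x) (f y) :=
  ⟨LinearEquiv.ofInjectiveEndo (basisChange n hn A B a3 a4) (basisChange_injective hA hAB),
    basisChange_famMul h3 h4⟩

end basisChange

lemma exists_ne_zero_pow_mul_eq_self {K : Type*} [Field K] [IsAlgClosed K] {c : K} (hc : c ≠ 0)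
    {k : ℕ} (hk : 2 ≤ k) : ∃ A : K, A ≠ 0 ∧ A ^ k * c = A := by
  obtain ⟨A, hA⟩ := IsAlgClosed.exists_pow_nat_eq c⁻¹ (show 0 < k - 1 by omega)
  have hA0 : A ≠ 0 := by
    rintro rfl
    rw [zero_pow (by omega), eq_comm, inv_eq_zero] at hA
    exact hc hA
  refine ⟨A, hA0, ?_⟩
  rw [show k = k - 1 + 1 by omega, pow_succ, hA]
  field_simp

lemma exists_famMul_iso_one_one {n : ℕ} {hn : 4 ≤ n} {α : ℂ} (hα : α ≠ 0) :
    ∃ f : (Fin (n+1) → ℂ) ≃ₗ[ℂ] (Fin (n+1) → ℂ),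
      ∀ x y, f (famMul n hn α α x y) = famMul n hn 1 1 (f x) (f y) := by
  obtain ⟨A, hA, hAα⟩ := exists_ne_zero_pow_mul_eq_self hα (k := n - 1) (by omega)
  exact exists_famMul_iso_of_transform (B := 0) hA (by simpa using hA)
    (by rw [hAα]; ring) (by rw [hAα]; ring)

lemma exists_famMul_iso_zero_one {n : ℕ} {hn : 4 ≤ n} {α3 α4 : ℂ} (hα4 : α4 ≠ 0)
    (hne : α3 ≠ α4) :
    ∃ f : (Fin (n+1) → ℂ) ≃ₗ[ℂ] (Fin (n+1) → ℂ),
      ∀ x y, f (famMul n hn α3 α4 x y) = famMul n hn 0 1 (f x) (f y) := by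
  obtain ⟨A, hA, hAα⟩ :=
    exists_ne_zero_pow_mul_eq_self (sub_ne_zero.mpr hne.symm) (k := n - 1) (by omega)
  have hAB : A + A ^ (n - 1) * α3 = A ^ (n - 1) * α4 := by linear_combination -hAα
  exact exists_famMul_iso_of_transform (B := A ^ (n - 1) * α3) hA
    (by rw [hAB]; exact mul_ne_zero (pow_ne_zero _ hA) hα4) (by ring) (by rw [mul_one, hAB])

section leftAnnihilator
variable {n : ℕ} {hn : 4 ≤ n} {α3 α4 : ℂ}

lemma famMul_left_eq_zero_iff {z : Fin (n+1) → ℂ} :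
    (∀ y, famMul n hn α3 α4 z y = 0) ↔
      z ⟨0, by omega⟩ + z ⟨1, by omega⟩ = 0 ∧
      α3 * z ⟨0, by omega⟩ + α4 * z ⟨1, by omega⟩ = 0 ∧
      ∀ j, 2 ≤ j → ∀ hj : j < n, z ⟨j, by omega⟩ = 0 := by
  constructor
  · intro hz
    have hz_at : ∀ y k (hk : k < n + 1), famMul n hn α3 α4 z y ⟨k, hk⟩ = 0 :=
      fun y k hk => congrFun (hz y) ⟨k, hk⟩
    refine ⟨?_, ?_, fun j h2 hj => ?_⟩
    · have := hz_at (Pi.single ⟨0, by omega⟩ 1) 2 (by omega)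
      rw [famMul_apply_two] at this
      simpa using this
    · have := hz_at (Pi.single ⟨1, by omega⟩ 1) n (by omega)
      rw [famMul_apply_last] at this
      simpa using this
    · have := hz_at (Pi.single ⟨0, by omega⟩ 1) (j + 1) (by omega)
      obtain hjn | rfl : j + 1 < n ∨ j + 1 = n := by omega
      · rw [famMul_apply_of_three_le_of_lt (by omega) hjn] at this
        simpa using this
      · rw [famMul_apply_last] at this
        simpa using this
  · rintro ⟨h01, hα, hz⟩ y
    funext ⟨k, hk⟩
    obtain rfl | rfl | rfl | ⟨h3k, hkn⟩ | rfl :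
        k = 0 ∨ k = 1 ∨ k = 2 ∨ (3 ≤ k ∧ k < n) ∨ n = k := by omega
    · exact famMul_apply_zero
    · exact famMul_apply_one
    · rw [famMul_apply_two, h01, zero_mul, Pi.zero_apply]
    · rw [famMul_apply_of_three_le_of_lt h3k hkn, hz (k - 1) (by omega) (by omega), zero_mul,
        Pi.zero_apply]
    · rw [famMul_apply_last, hz (n - 1) (by omega) (by omega), Pi.zero_apply]
      linear_combination y ⟨1, by omega⟩ * hα

lemma famMul_single_last_left_eq_zero (y : Fin (n+1) → ℂ) :
    famMul n hn α3 α4 (Pi.single (Fin.last n) 1) y = 0 := by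
  have h0n : (0 : ℕ) ≠ n := by omega
  have h1n : (1 : ℕ) ≠ n := by omega
  exact famMul_left_eq_zero_iff.mpr ⟨by simp [Fin.ext_iff, h0n, h1n],
    by simp [Fin.ext_iff, h0n, h1n],
    fun j _ hj => by simp [Fin.ext_iff, hj.ne]⟩ y

lemma famMul_sub_single_left_eq_zero {α : ℂ} (y : Fin (n+1) → ℂ) :
    famMul n hn α α (Pi.single ⟨0, by omega⟩ 1 - Pi.single ⟨1, by omega⟩ 1) y = 0 :=
  famMul_left_eq_zero_iff.mpr ⟨by simp, by simp,
    fun j h2 _ => by simp [Fin.ext_iff, show j ≠ 0 by omega, show j ≠ 1 by omega]⟩ y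

lemma eq_single_last_of_famMul_left_eq_zero (hne : α3 ≠ α4) {z : Fin (n+1) → ℂ}
    (hz : ∀ y, famMul n hn α3 α4 z y = 0) : z = Pi.single (Fin.last n) (z (Fin.last n)) := by
  obtain ⟨h01, hα, hmid⟩ := famMul_left_eq_zero_iff.mp hz
  have hz0 : z ⟨0, by omega⟩ = 0 := by
    have : (α3 - α4) * z ⟨0, by omega⟩ = 0 := by linear_combination hα - α4 * h01
    simpa [sub_eq_zero, hne] using this
  have hz1 : z ⟨1, by omega⟩ = 0 := by linear_combination h01 - hz0
  funext ⟨k, hk⟩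
  obtain rfl | rfl | ⟨h2, hkn⟩ | rfl : k = 0 ∨ k = 1 ∨ (2 ≤ k ∧ k < n) ∨ n = k := by omega
  · simpa [Pi.single_apply, Fin.ext_iff, show (0 : ℕ) ≠ n by omega] using hz0
  · simpa [Pi.single_apply, Fin.ext_iff, show (1 : ℕ) ≠ n by omega] using hz1
  · simpa [Pi.single_apply, Fin.ext_iff, hkn.ne] using hmid k h2 hkn
  · simp [Pi.single_apply, Fin.ext_iff]; rfl

end leftAnnihilator

lemma not_exists_famMul_iso_of_ne {n : ℕ} {hn : 4 ≤ n} (α : ℂ) {β3 β4 : ℂ} (hne : β3 ≠ β4) :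
    ¬ ∃ f : (Fin (n+1) → ℂ) ≃ₗ[ℂ] (Fin (n+1) → ℂ),
      ∀ x y, f (famMul n hn α α x y) = famMul n hn β3 β4 (f x) (f y) := by
  rintro ⟨f, hf⟩
  have hann : ∀ z, (∀ y, famMul n hn α α z y = 0) →
      f z = Pi.single (Fin.last n) (f z (Fin.last n)) := by
    intro z hz
    refine eq_single_last_of_famMul_left_eq_zero (hn := hn) hne fun y => ?_
    rw [← f.apply_symm_apply y, ← hf, hz, map_zero]
  set u : Fin (n+1) → ℂ := Pi.single ⟨0, by omega⟩ 1 - Pi.single ⟨1, by omega⟩ 1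
  set w : Fin (n+1) → ℂ := Pi.single (Fin.last n) 1
  have hu := hann u famMul_sub_single_left_eq_zero
  have hw := hann w famMul_single_last_left_eq_zero
  set c := f u (Fin.last n)
  set d := f w (Fin.last n)
  have hdc : d • u = c • w := f.injective <| by
    rw [map_smul, map_smul, hu, hw, ← Pi.single_smul', ← Pi.single_smul', smul_eq_mul,
      smul_eq_mul, mul_comm]
  have hd : d = 0 := by
    simpa [u, w, Pi.single_apply, Fin.ext_iff, show (0 : ℕ) ≠ n by omega]
      using congrFun hdc ⟨0, by omega⟩
  have hw0 : w = 0 := f.injective <| by rw [hw, hd, Pi.single_zero, map_zero]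
  simpa [w] using congrFun hw0 (Fin.last n)

/-- For `α_4 ≠ 0`: `L(α_3,α_4) ≅ L(1,1)` if `α_3 = α_4`, and
`L(α_3,α_4) ≅ L(0,1)` if `α_3 ≠ α_4`; moreover `L(1,1)` and `L(0,1)` are
not isomorphic. -/
theorem fam_alpha4_nonzero_iso (n : ℕ) (hn : 4 ≤ n) (α3 α4 : ℂ) (hα4 : α4 ≠ 0) :
    (α3 = α4 →
      ∃ f : (Fin (n+1) → ℂ) ≃ₗ[ℂ] (Fin (n+1) → ℂ),
        ∀ x y, f (famMul n hn α3 α4 x y) = famMul n hn 1 1 (f x) (f y)) ∧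
    (α3 ≠ α4 →
      ∃ f : (Fin (n+1) → ℂ) ≃ₗ[ℂ] (Fin (n+1) → ℂ),
        ∀ x y, f (famMul n hn α3 α4 x y) = famMul n hn 0 1 (f x) (f y)) ∧
    ¬ ∃ f : (Fin (n+1) → ℂ) ≃ₗ[ℂ] (Fin (n+1) → ℂ),
        ∀ x y, f (famMul n hn 1 1 x y) = famMul n hn 0 1 (f x) (f y) :=
  ⟨fun h => by subst h; exact exists_famMul_iso_one_one hα4, exists_famMul_iso_zero_one hα4,
    not_exists_famMul_iso_of_ne 1 zero_ne_one⟩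
end

section
/- In the family M(α_4, β_4) (products [e_i,e_1]=e_{i+1} for 1 ≤ i ≤ n-2, [e_n,e_1]=e_2+e_{n+1}, [e_1,e_n]=e_{n+2}, [e_n,e_n]=α_4 e_{n+1}+β_4 e_{n+2} on an (n+2)-dimensional space), the expressions α_4 - β_4 and β_4 - 1 are nullity invariants under the parameter transformations α_4' = B_n^2 α_4 / D, β_4' = B_n(A_1 β_4 + A_n α_4)/D, where D = A_1^2 + A_1 A_n β_4 + A_1 A_n α_4 + A_n^2 α_4, B_n = A_1 + A_n, and A_1 (A_1+A_n) D ≠ 0. -/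
/-!
The new differences are multiples of the old ones over the common denominator `D`:
`α' - β' = A₁ (A₁ + Aₙ) (α - β) / D` and `β' - 1 = A₁² (β - 1) / D`.
Since `A₁ (A₁ + Aₙ) D ≠ 0`, each new difference vanishes exactly when the old one does.
-/

section

variable {K : Type*} [Field K]

theorem eq_iff_of_sub_eq_mul_div {u v c e d : K} (h : u - v = c * e / d) (hc : c ≠ 0)
    (hd : d ≠ 0) : u = v ↔ e = 0 := by
  rw [← sub_eq_zero, h, div_eq_zero_iff, mul_eq_zero]
  simp only [hc, hd, false_or, or_false]

namespace NullityInvariant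

def denom (a n α β : K) : K := a ^ 2 + a * n * β + a * n * α + n ^ 2 * α

def alphaImage (a n α β : K) : K := (a + n) ^ 2 * α / denom a n α β

def betaImage (a n α β : K) : K := (a + n) * (a * β + n * α) / denom a n α β

theorem alphaImage_sub_betaImage (a n α β : K) :
    alphaImage a n α β - betaImage a n α β = a * (a + n) * (α - β) / denom a n α β := by
  rw [alphaImage, betaImage, ← sub_div]
  ring

theorem betaImage_sub_one (a n α β : K) (hD : denom a n α β ≠ 0) :
    betaImage a n α β - 1 = a ^ 2 * (β - 1) / denom a n α β := by
  rw [betaImage, div_sub_one hD, denom]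
  ring

end NullityInvariant

end

/-- In the family `M(α_4,β_4)`, the expressions `α_4 - β_4` and `β_4 - 1`
are nullity invariants under the parameter transformation
`α_4' = B_n² α_4 / D`, `β_4' = B_n (A_1 β_4 + A_n α_4) / D`, where
`D = A_1² + A_1 A_n β_4 + A_1 A_n α_4 + A_n² α_4`, `B_n = A_1 + A_n`,
and `A_1 (A_1 + A_n) D ≠ 0`. -/
theorem M_nullity_invariants (A1 An α4 β4 : ℂ)
    (h : A1 * (A1 + An) *
        (A1 ^ 2 + A1 * An * β4 + A1 * An * α4 + An ^ 2 * α4) ≠ 0) :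
    ((A1 + An) ^ 2 * α4 /
          (A1 ^ 2 + A1 * An * β4 + A1 * An * α4 + An ^ 2 * α4) -
        (A1 + An) * (A1 * β4 + An * α4) /
          (A1 ^ 2 + A1 * An * β4 + A1 * An * α4 + An ^ 2 * α4) =
      A1 * (A1 + An) * (α4 - β4) /
          (A1 ^ 2 + A1 * An * β4 + A1 * An * α4 + An ^ 2 * α4)) ∧
    ((A1 + An) * (A1 * β4 + An * α4) /
          (A1 ^ 2 + A1 * An * β4 + A1 * An * α4 + An ^ 2 * α4) - 1 =
      A1 ^ 2 * (β4 - 1) /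
          (A1 ^ 2 + A1 * An * β4 + A1 * An * α4 + An ^ 2 * α4)) ∧
    ((A1 + An) ^ 2 * α4 /
          (A1 ^ 2 + A1 * An * β4 + A1 * An * α4 + An ^ 2 * α4) =
        (A1 + An) * (A1 * β4 + An * α4) /
          (A1 ^ 2 + A1 * An * β4 + A1 * An * α4 + An ^ 2 * α4) ↔
      α4 = β4) ∧
    ((A1 + An) * (A1 * β4 + An * α4) /
          (A1 ^ 2 + A1 * An * β4 + A1 * An * α4 + An ^ 2 * α4) = 1 ↔
      β4 = 1) := by
  obtain ⟨hAB, hD⟩ := mul_ne_zero_iff.mp h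
  have hα := NullityInvariant.alphaImage_sub_betaImage A1 An α4 β4
  have hβ := NullityInvariant.betaImage_sub_one A1 An α4 β4 hD
  refine ⟨hα, hβ, ?_, ?_⟩
  · exact (eq_iff_of_sub_eq_mul_div hα hAB hD).trans sub_eq_zero
  · have hA1 : A1 ^ 2 ≠ 0 := pow_ne_zero 2 (left_ne_zero_of_mul hAB)
    exact (eq_iff_of_sub_eq_mul_div hβ hA1 hD).trans sub_eq_zero
end
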